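/- arXiv:2305.01950 — 6 statements merged into one kernel-verified Lean document; each statement's English description precedes it below -/
import Mathlib

section
/- The Shannon-type four-term functional equation holds for the Kontsevich 1½-logarithm: for a field k of characteristic p and elements x, y in k with x ≠ 0, y ≠ 0, x ≠ 1, y ≠ 1, and x + y ≠ 1, one has £₁(x) + (1-x)^p · £₁(y/(1-x)) = £₁(y) + (1-y)^p · £₁(x/(1-y)), where £₁(s) = ∑_{i=1}^{p-1} s^i / i. (Note: the natural infinitesimal/characteristic-p form of the entropy equation uses the p-th power twist on coefficients.) -/
open Finset

/-- The Kontsevich 1½-logarithm `£₁(s) = ∑_{i=1}^{p-1} s^i / i`. -/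
noncomputable def kontsevichLog (p : ℕ) {k : Type*} [Field k] (s : k) : k :=
  ∑ i ∈ Finset.Icc 1 (p - 1), (i : k)⁻¹ * s ^ i

private lemma kl_nat_id (a b : ℕ) (ha : 1 ≤ a) (hb : 1 ≤ b) :
    a * Nat.choose (a + b - 1) a = b * Nat.choose (a + b - 1) b := by
  have h1 := Nat.add_one_mul_choose_eq (a + b - 1) (a - 1)
  have h2 := Nat.add_one_mul_choose_eq (a + b - 1) (b - 1)
  have e1 : a + b - 1 + 1 = a + b := by omega
  have e2 : a - 1 + 1 = a := by omega
  have e3 : b - 1 + 1 = b := by omega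
  rw [e1, e2] at h1
  rw [e1, e3] at h2
  have hs1 : (a + b - 1).choose (a - 1) = (a + b - 1).choose b := by
    rw [← Nat.choose_symm (show a - 1 ≤ a + b - 1 by omega)]
    congr 1
    omega
  have hs2 : (a + b - 1).choose (b - 1) = (a + b - 1).choose a := by
    rw [← Nat.choose_symm (show b - 1 ≤ a + b - 1 by omega)]
    congr 1
    omega
  rw [hs1] at h1
  rw [hs2] at h2
  have hch : (a + b).choose a = (a + b).choose b := by
    rw [← Nat.choose_symm (show a ≤ a + b by omega)]
    congr 1
    omega
  apply Nat.eq_of_mul_eq_mul_left (show 0 < a + b by omega)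
  calc (a + b) * (a * (a + b - 1).choose a)
      = a * ((a + b) * (a + b - 1).choose a) := by ring
    _ = a * ((a + b).choose b * b) := by rw [h2]
    _ = b * ((a + b).choose a * a) := by rw [hch]; ring
    _ = b * ((a + b) * (a + b - 1).choose b) := by rw [h1]
    _ = (a + b) * (b * (a + b - 1).choose b) := by ring

private lemma kl_cast_ne_zero (p : ℕ) [hp : Fact p.Prime] {k : Type*} [Field k] [CharP k p]
    {a : ℕ} (ha : 1 ≤ a) (hap : a < p) : (a : k) ≠ 0 := by
  intro h
  have := (CharP.cast_eq_zero_iff k p a).mp h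
  exact absurd (Nat.le_of_dvd (by omega) this) (by omega)

private lemma kl_cast_choose (p : ℕ) [Fact p.Prime] {k : Type*} [Field k] [CharP k p]
    {a : ℕ} (ha : 1 ≤ a) : ∀ b : ℕ, a + b ≤ p →
    (((p - a).choose b : ℕ) : k) = (-1 : k) ^ b * (((a + b - 1).choose b : ℕ) : k) := by
  intro b
  induction b with
  | zero => simp
  | succ b ih =>
    intro hab
    have hab' : a + b ≤ p := by omega
    have ihb := ih hab'
    have hb1 : ((b : k) + 1) ≠ 0 := by
      have h0 : (((b + 1 : ℕ)) : k) ≠ 0 := kl_cast_ne_zero p (by omega) (by omega)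
      push_cast at h0
      exact h0
    have h1 : (((p - a).choose (b + 1) : ℕ) : k) * ((b : k) + 1) =
        (((p - a).choose b : ℕ) : k) * (((p - a - b : ℕ)) : k) := by
      have h := congrArg (fun n : ℕ => (n : k)) (Nat.choose_succ_right_eq (p - a) b)
      push_cast at h
      exact h
    have hcast : (((p - a - b : ℕ)) : k) = -((a : k) + (b : k)) := by
      have h : p - a - b = p - (a + b) := by omega
      rw [h, Nat.cast_sub hab']
      push_cast
      rw [CharP.cast_eq_zero k p]
      ring
    have h2 : ((a : k) + (b : k)) * (((a + b - 1).choose b : ℕ) : k) =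
        (((a + b).choose (b + 1) : ℕ) : k) * ((b : k) + 1) := by
      have hh := Nat.add_one_mul_choose_eq (a + b - 1) b
      have e1 : a + b - 1 + 1 = a + b := by omega
      rw [e1] at hh
      have h := congrArg (fun n : ℕ => (n : k)) hh
      push_cast at h
      exact h
    have key : (((p - a).choose (b + 1) : ℕ) : k) * ((b : k) + 1) =
        ((-1 : k) ^ (b + 1) * (((a + (b + 1) - 1).choose (b + 1) : ℕ) : k)) * ((b : k) + 1) := by
      rw [h1, hcast, ihb]
      have e : a + (b + 1) - 1 = a + b := by omega
      rw [e]
      calc (-1 : k) ^ b * (((a + b - 1).choose b : ℕ) : k) * -((a : k) + (b : k))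
          = -(-1 : k) ^ b * (((a : k) + (b : k)) * (((a + b - 1).choose b : ℕ) : k)) := by
            ring
        _ = -(-1 : k) ^ b * ((((a + b).choose (b + 1) : ℕ) : k) * ((b : k) + 1)) := by
            rw [h2]
        _ = (-1 : k) ^ (b + 1) * (((a + b).choose (b + 1) : ℕ) : k) * ((b : k) + 1) := by
            rw [pow_succ]
            ring
    exact mul_right_cancel₀ hb1 key

private lemma kl_key (p : ℕ) [Fact p.Prime] {k : Type*} [Field k] [CharP k p]
    (a b : ℕ) (ha : 1 ≤ a) (hb : 1 ≤ b) (hab : a + b ≤ p) :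
    (a : k)⁻¹ * ((-1 : k) ^ b * (((p - a).choose b : ℕ) : k)) =
      (b : k)⁻¹ * ((-1 : k) ^ a * (((p - b).choose a : ℕ) : k)) := by
  have hA : (a : k) ≠ 0 := kl_cast_ne_zero p ha (by omega)
  have hB : (b : k) ≠ 0 := kl_cast_ne_zero p hb (by omega)
  rw [kl_cast_choose p ha b hab, kl_cast_choose p hb a (by omega)]
  have hred : ∀ (m : ℕ) (c : k), (-1 : k) ^ m * ((-1 : k) ^ m * c) = c := by
    intro m c
    rw [← mul_assoc, ← pow_add, Even.neg_one_pow ⟨m, rfl⟩, one_mul]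
  rw [hred, hred, show b + a - 1 = a + b - 1 by omega]
  have hn := congrArg (fun n : ℕ => (n : k)) (kl_nat_id a b ha hb)
  push_cast at hn
  field_simp
  linear_combination -hn

private lemma kl_expand (p : ℕ) [Fact p.Prime] {k : Type*} [Field k] [CharP k p]
    (X Y : k) (hX : (1 : k) - X ≠ 0) :
    kontsevichLog p X + (1 - X) ^ p * kontsevichLog p (Y / (1 - X)) =
      kontsevichLog p X + kontsevichLog p Y +
        ∑ i ∈ Icc 1 (p - 1), ∑ j ∈ Icc 1 (p - i),
          (i : k)⁻¹ * Y ^ i * ((-1 : k) ^ j * (((p - i).choose j : ℕ) : k) * X ^ j) := by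
  have h1 : (1 - X) ^ p * kontsevichLog p (Y / (1 - X)) =
      ∑ i ∈ Icc 1 (p - 1), (i : k)⁻¹ * Y ^ i * (1 - X) ^ (p - i) := by
    unfold kontsevichLog
    rw [Finset.mul_sum]
    refine Finset.sum_congr rfl fun i hi => ?_
    have hip : i ≤ p := le_trans (mem_Icc.mp hi).2 (Nat.sub_le p 1)
    rw [pow_sub₀ (1 - X) hX hip]
    ring
  rw [h1]
  have h2 : ∀ i ∈ Icc 1 (p - 1), (i : k)⁻¹ * Y ^ i * (1 - X) ^ (p - i) =
      (i : k)⁻¹ * Y ^ i +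
        ∑ j ∈ Icc 1 (p - i), (i : k)⁻¹ * Y ^ i *
          ((-1 : k) ^ j * (((p - i).choose j : ℕ) : k) * X ^ j) := by
    intro i hi
    have hexp : (1 - X) ^ (p - i) =
        ∑ j ∈ Finset.range (p - i + 1), (-X) ^ j * (((p - i).choose j : ℕ) : k) := by
      have h := add_pow (-X) (1 : k) (p - i)
      simp only [one_pow, mul_one] at h
      rw [show (1 : k) - X = -X + 1 by ring, h]
    rw [hexp, Finset.mul_sum, Finset.sum_range_succ']
    simp only [pow_zero, Nat.choose_zero_right, Nat.cast_one, one_mul, mul_one]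
    rw [add_comm]
    congr 1
    rw [show Icc 1 (p - i) = Ico 1 (p - i + 1) from (Finset.Ico_add_one_right_eq_Icc 1 (p - i)).symm,
      Finset.sum_Ico_eq_sum_range]
    simp only [Nat.add_sub_cancel]
    refine Finset.sum_congr rfl fun j _ => ?_
    rw [show 1 + j = j + 1 by omega, neg_pow X (j + 1)]
    ring
  rw [Finset.sum_congr rfl h2, Finset.sum_add_distrib]
  unfold kontsevichLog
  ring

/-- The four-term (entropy-type) functional equation for the Kontsevich
1½-logarithm in characteristic `p`, with the `p`-th power twist on
coefficients. -/
theorem kontsevichLog_four_term (p : ℕ) [Fact p.Prime] (hp5 : 5 ≤ p)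
    (k : Type*) [Field k] [CharP k p] (x y : k)
    (hx0 : x ≠ 0) (hy0 : y ≠ 0) (hx1 : x ≠ 1) (hy1 : y ≠ 1) (hxy : x + y ≠ 1) :
    kontsevichLog p x + (1 - x) ^ p * kontsevichLog p (y / (1 - x)) =
      kontsevichLog p y + (1 - y) ^ p * kontsevichLog p (x / (1 - y)) := by
  have hx' : (1 : k) - x ≠ 0 := sub_ne_zero.mpr (Ne.symm hx1)
  have hy' : (1 : k) - y ≠ 0 := sub_ne_zero.mpr (Ne.symm hy1)
  rw [kl_expand p (k := k) x y hx', kl_expand p (k := k) y x hy']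
  have hS :
      ∑ i ∈ Icc 1 (p - 1), ∑ j ∈ Icc 1 (p - i),
          (i : k)⁻¹ * y ^ i * ((-1 : k) ^ j * (((p - i).choose j : ℕ) : k) * x ^ j) =
      ∑ i ∈ Icc 1 (p - 1), ∑ j ∈ Icc 1 (p - i),
          (i : k)⁻¹ * x ^ i * ((-1 : k) ^ j * (((p - i).choose j : ℕ) : k) * y ^ j) := by
    set r : Finset (ℕ × ℕ) :=
      (Finset.range (p + 1) ×ˢ Finset.range (p + 1)).filter
        (fun q => 1 ≤ q.1 ∧ 1 ≤ q.2 ∧ q.1 + q.2 ≤ p) with hr_def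
    have hp2 : 2 ≤ p := by omega
    have hr : ∀ q : ℕ × ℕ, q ∈ r ↔ q.1 ∈ Icc 1 (p - 1) ∧ q.2 ∈ Icc 1 (p - q.1) := by
      intro q
      simp only [hr_def, Finset.mem_filter, Finset.mem_product, Finset.mem_range, mem_Icc]
      omega
    rw [← Finset.sum_finset_product' r _ _ hr, ← Finset.sum_finset_product' r _ _ hr]
    refine Finset.sum_equiv (Equiv.prodComm ℕ ℕ) (fun q => ?_) (fun q hq => ?_)
    · simp only [hr_def, Finset.mem_filter, Finset.mem_product, Finset.mem_range,
        Equiv.prodComm_apply, Prod.fst_swap, Prod.snd_swap]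
      omega
    · rw [hr] at hq
      simp only [mem_Icc] at hq
      obtain ⟨⟨h1, h2⟩, h3, h4⟩ := hq
      have hab : q.1 + q.2 ≤ p := by omega
      have hkey := kl_key p (k := k) q.1 q.2 h1 h3 hab
      simp only [Equiv.prodComm_apply, Prod.fst_swap, Prod.snd_swap]
      linear_combination (y ^ q.1 * x ^ q.2) * hkey
  rw [hS]
  ring
end

section
/- Let R be a commutative ring of characteristic p and m ≤ p. The map log: (1 + t·R[t]/(t^m))^× → R[t]/(t^m) defined by log(1+z) = ∑_{1 ≤ n < p} (-1)^{n+1} z^n/n for z ∈ t·R[t]/(t^m) is a group homomorphism from the multiplicative group of 1-units to the additive group. -/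
open Finset Polynomial

variable (p m : ℕ) (R : Type*) [CommRing R] [CharP R p]

/-- The truncated polynomial ring `R[t]/(t^m)`. -/
abbrev TruncPoly := Polynomial R ⧸ Ideal.span {(Polynomial.X : Polynomial R) ^ m}

/-- The image of `t` in `R[t]/(t^m)`. -/
noncomputable def truncT : TruncPoly m R :=
  Ideal.Quotient.mk _ Polynomial.X

/-- The canonical ring map `ZMod p → R[t]/(t^m)` (using `CharP R p`), used to
interpret the inverses `n⁻¹` for `1 ≤ n < p`. -/
noncomputable def zmodToTrunc : ZMod p →+* TruncPoly m R :=
  (Ideal.Quotient.mk _).comp ((Polynomial.C : R →+* Polynomial R).comp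
    (ZMod.castHom (dvd_refl p) R))

/-- The truncated logarithm `log(1+z) = ∑_{1 ≤ n < p} (-1)^{n+1} z^n / n` on
`R[t]/(t^m)`, where `n⁻¹` is computed in `ZMod p` and cast into the ring. -/
noncomputable def truncLog (z : TruncPoly m R) : TruncPoly m R :=
  ∑ n ∈ Finset.Ico 1 p, (-1 : TruncPoly m R) ^ (n + 1) *
    zmodToTrunc p m R ((n : ZMod p)⁻¹) * z ^ n

namespace TruncLogAux

open MvPolynomial

abbrev A : Type := MvPolynomial (Fin 2) ℤ

/-- all coefficients in total degree `< k` vanish -/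
def P (f : A) (k : ℕ) : Prop :=
  ∀ d : Fin 2 →₀ ℕ, d 0 + d 1 < k → MvPolynomial.coeff d f = 0

lemma fin2_finsupp_eq_zero {d : Fin 2 →₀ ℕ} (h : d 0 + d 1 = 0) : d = 0 := by
  ext a
  fin_cases a <;> simp <;> omega

lemma P_zero (f : A) : P f 0 := fun d hd => absurd hd (by omega)

lemma P_sub {f g : A} {k : ℕ} (hf : P f k) (hg : P g k) : P (f - g) k := by
  intro d hd; simp [MvPolynomial.coeff_sub, hf d hd, hg d hd]

lemma P_neg {f : A} {k : ℕ} (hf : P f k) : P (-f) k := by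
  intro d hd; simp [hf d hd]

lemma P_mul {f g : A} {j k : ℕ} (hf : P f j) (hg : P g k) : P (f * g) (j + k) := by
  intro d hd
  rw [MvPolynomial.coeff_mul]
  apply Finset.sum_eq_zero
  rintro ⟨u, v⟩ huv
  rw [Finset.HasAntidiagonal.mem_antidiagonal] at huv
  have h0 : u 0 + v 0 = d 0 := by rw [← huv]; simp
  have h1 : u 1 + v 1 = d 1 := by rw [← huv]; simp
  rcases lt_or_ge (u 0 + u 1) j with h | h
  · simp [hf u h]
  · have : v 0 + v 1 < k := by omega
    simp [hg v this]

lemma P_mul_left {f g : A} {k : ℕ} (hf : P f k) : P (g * f) k := by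
  have := P_mul (P_zero g) hf
  simpa using this

lemma P_pow {f : A} (hf : P f 1) (n : ℕ) : P (f ^ n) n := by
  induction n with
  | zero => exact P_zero _
  | succ n ih => rw [pow_succ]; exact P_mul ih hf

lemma P_mono {f : A} {j k : ℕ} (hf : P f k) (h : j ≤ k) : P f j :=
  fun d hd => hf d (by omega)

lemma P_X (i : Fin 2) : P (X i : A) 1 := by
  intro d hd
  have : d = 0 := fin2_finsupp_eq_zero (by omega)
  subst this
  classical
  rw [MvPolynomial.coeff_zero_X]

lemma P_cancel {f h : A} {k : ℕ} (hf : P f 1) (H : P ((1 + f) * h) k) : P h k := by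
  intro d hd
  have key : ∀ n : ℕ, ∀ d : Fin 2 →₀ ℕ, d 0 + d 1 = n → d 0 + d 1 < k → coeff d h = 0 := by
    intro n
    induction n using Nat.strong_induction_on with
    | _ n ih =>
      intro d hdn hdk
      have h2 : coeff d ((1 + f) * h) = 0 := H d hdk
      rw [add_mul, one_mul, MvPolynomial.coeff_add, MvPolynomial.coeff_mul] at h2
      have h3 : ∑ x ∈ Finset.HasAntidiagonal.antidiagonal d, coeff x.1 f * coeff x.2 h = 0 := by
        apply Finset.sum_eq_zero
        rintro ⟨u, v⟩ huv
        rw [Finset.HasAntidiagonal.mem_antidiagonal] at huv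
        have h0 : u 0 + v 0 = d 0 := by rw [← huv]; simp
        have h1 : u 1 + v 1 = d 1 := by rw [← huv]; simp
        rcases Nat.eq_zero_or_pos (u 0 + u 1) with hu | hu
        · simp [hf u (by omega)]
        · have hv : coeff v h = 0 := ih (v 0 + v 1) (by omega) v rfl (by omega)
          simp [hv]
      rw [h3, add_zero] at h2
      exact h2
  exact key _ d rfl hd

lemma coeff_pderiv (i : Fin 2) (f : A) (d : Fin 2 →₀ ℕ) :
    coeff d (pderiv i f) = (d i + 1 : ℤ) * coeff (d + Finsupp.single i 1) f := by
  induction f using MvPolynomial.induction_on' with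
  | add f g hf hg => simp only [map_add, MvPolynomial.coeff_add, hf, hg]; ring
  | monomial s a =>
    rw [pderiv_monomial, MvPolynomial.coeff_monomial, MvPolynomial.coeff_monomial]
    by_cases h : s = d + Finsupp.single i 1
    · have h1 : s - Finsupp.single i 1 = d := by
        subst h; ext a'; simp [Finsupp.single_apply]
      have h2 : s i = d i + 1 := by subst h; simp
      rw [if_pos h1, if_pos h, h2]
      push_cast; ring
    · rw [if_neg h]
      by_cases h1 : s - Finsupp.single i 1 = d
      · rw [if_pos h1]
        by_cases hsi : s i = 0
        · simp [hsi]
        · exfalso; apply h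
          ext a'
          have := congrArg (fun g : Fin 2 →₀ ℕ => g a') h1
          simp only [Finsupp.tsub_apply, Finsupp.add_apply, Finsupp.single_apply] at this ⊢
          by_cases ha : i = a'
          · subst ha; simp at this ⊢; omega
          · simp [ha] at this ⊢; omega
      · rw [if_neg h1]; ring

variable (p : ℕ)

/-- scaled truncated log with integer coefficients -/
noncomputable def Lo (u : A) : A :=
  ∑ n ∈ Finset.Ico 1 p, MvPolynomial.C ((-1 : ℤ) ^ (n + 1) * ((p - 1).factorial / n : ℕ)) * u ^ n

/-- geometric sum -/
noncomputable def Geo (u : A) : A := ∑ k ∈ Finset.range (p - 1), (-u) ^ k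

noncomputable def XX : A := X 0
noncomputable def YY : A := X 1
noncomputable def ZZ : A := XX + YY + XX * YY
noncomputable def FF : A := Lo p ZZ - Lo p XX - Lo p YY

lemma one_add_mul_geo (u : A) : (1 + u) * Geo p u = 1 - (-u) ^ (p - 1) := by
  have h := geom_sum_mul (-u) (p - 1)
  rw [Geo]
  linear_combination (-1 : A) * h

lemma pderiv_Lo (i : Fin 2) (u : A) :
    pderiv i (Lo p u) = MvPolynomial.C ((p - 1).factorial : ℤ) * Geo p u * pderiv i u := by
  rw [Lo, map_sum]
  have : ∀ n ∈ Finset.Ico 1 p,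
      pderiv i (MvPolynomial.C ((-1 : ℤ) ^ (n + 1) * ((p - 1).factorial / n : ℕ)) * u ^ n)
      = MvPolynomial.C ((p - 1).factorial : ℤ) * ((-1 : A) ^ (n + 1) * u ^ (n - 1)) * pderiv i u := by
    intro n hn
    rw [Finset.mem_Ico] at hn
    have hdvd : n ∣ (p - 1).factorial := Nat.dvd_factorial (by omega) (by omega)
    have hc' : (MvPolynomial.C (((p - 1).factorial / n : ℕ) : ℤ) : A) * MvPolynomial.C ((n : ℕ) : ℤ)
        = MvPolynomial.C (((p - 1).factorial : ℕ) : ℤ) := by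
      rw [← MvPolynomial.C_mul, ← Nat.cast_mul, Nat.div_mul_cancel hdvd]
    rw [pderiv_C_mul, pderiv_pow, ← map_natCast (MvPolynomial.C : ℤ →+* A) n]
    simp only [MvPolynomial.C_mul, map_pow, map_neg, map_one]
    linear_combination ((-1 : A) ^ (n + 1) * u ^ (n - 1) * pderiv i u) * hc'
  rw [Finset.sum_congr rfl this, ← Finset.sum_mul, ← Finset.mul_sum]
  congr 2
  rw [Geo, Finset.sum_Ico_eq_sum_range]
  apply Finset.sum_congr rfl
  intro k _
  have h1 : 1 + k - 1 = k := by omega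
  have h2 : (-1 : A) ^ (1 + k + 1) = (-1) ^ k := by
    rw [show 1 + k + 1 = k + 2 by omega, pow_add]; simp
  rw [h1, h2, neg_pow]
  ring

lemma pderiv0_ZZ : pderiv 0 ZZ = 1 + YY := by
  simp [ZZ, XX, YY, pderiv_X_self, pderiv_X_of_ne (show (1 : Fin 2) ≠ 0 by decide)]

lemma pderiv1_ZZ : pderiv 1 ZZ = 1 + XX := by
  simp [ZZ, XX, YY, pderiv_X_self, pderiv_X_of_ne (show (0 : Fin 2) ≠ 1 by decide)]

lemma pd0X : pderiv 0 XX = 1 := by simp [XX, pderiv_X_self]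
lemma pd0Y : pderiv 0 YY = 0 := by
  simp [YY, pderiv_X_of_ne (show (1 : Fin 2) ≠ 0 by decide)]
lemma pd1X : pderiv 1 XX = 0 := by
  simp [XX, pderiv_X_of_ne (show (0 : Fin 2) ≠ 1 by decide)]
lemma pd1Y : pderiv 1 YY = 1 := by simp [YY, pderiv_X_self]

lemma key0 : (1 + ZZ) * pderiv 0 (FF p) =
    MvPolynomial.C ((p - 1).factorial : ℤ) *
      ((1 + YY) * ((-XX) ^ (p - 1) - (-ZZ) ^ (p - 1))) := by
  have hx := one_add_mul_geo p XX
  have hz := one_add_mul_geo p ZZ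
  rw [FF, map_sub, map_sub, pderiv_Lo, pderiv_Lo, pderiv_Lo, pderiv0_ZZ, pd0X, pd0Y]
  simp only [ZZ, XX, YY] at hx hz ⊢
  linear_combination (MvPolynomial.C ((p - 1).factorial : ℤ) * (1 + (X 1 : A))) * hz -
    (MvPolynomial.C ((p - 1).factorial : ℤ) * (1 + (X 1 : A))) * hx

lemma key1 : (1 + ZZ) * pderiv 1 (FF p) =
    MvPolynomial.C ((p - 1).factorial : ℤ) *
      ((1 + XX) * ((-YY) ^ (p - 1) - (-ZZ) ^ (p - 1))) := by
  have hy := one_add_mul_geo p YY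
  have hz := one_add_mul_geo p ZZ
  rw [FF, map_sub, map_sub, pderiv_Lo, pderiv_Lo, pderiv_Lo, pderiv1_ZZ, pd1X, pd1Y]
  simp only [ZZ, XX, YY] at hy hz ⊢
  linear_combination (MvPolynomial.C ((p - 1).factorial : ℤ) * (1 + (X 0 : A))) * hz -
    (MvPolynomial.C ((p - 1).factorial : ℤ) * (1 + (X 0 : A))) * hy

lemma cc_Lo (u : A) (hu : constantCoeff u = 0) : constantCoeff (Lo p u) = 0 := by
  rw [Lo, map_sum]
  apply Finset.sum_eq_zero
  intro n hn
  rw [Finset.mem_Ico] at hn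
  rw [map_mul, map_pow, hu, zero_pow (by omega : n ≠ 0), mul_zero]

lemma cc_FF : constantCoeff (FF p) = 0 := by
  have hZ : constantCoeff ZZ = 0 := by simp [ZZ, XX, YY]
  have hX : constantCoeff XX = 0 := by simp [XX]
  have hY : constantCoeff YY = 0 := by simp [YY]
  rw [FF, map_sub, map_sub, cc_Lo p _ hZ, cc_Lo p _ hX, cc_Lo p _ hY]
  ring

lemma P_XX : P XX 1 := P_X 0
lemma P_YY : P YY 1 := P_X 1

lemma P_ZZ : P ZZ 1 := by
  intro d hd
  rw [ZZ, MvPolynomial.coeff_add, MvPolynomial.coeff_add, P_XX d hd, P_YY d hd,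
    P_mono (P_mul P_XX P_YY) (by omega : 1 ≤ 1 + 1) d hd]
  ring

lemma P_pd0 : P (pderiv 0 (FF p)) (p - 1) := by
  apply P_cancel P_ZZ
  rw [key0]
  exact P_mul_left (P_mul_left (P_sub (P_pow (P_neg P_XX) _) (P_pow (P_neg P_ZZ) _)))

lemma P_pd1 : P (pderiv 1 (FF p)) (p - 1) := by
  apply P_cancel P_ZZ
  rw [key1]
  exact P_mul_left (P_mul_left (P_sub (P_pow (P_neg P_YY) _) (P_pow (P_neg P_ZZ) _)))

lemma coeff_eq_zero_of_pderiv (i : Fin 2) (f : A) (k : ℕ) (hf : P (pderiv i f) k)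
    (d : Fin 2 →₀ ℕ) (hdi : 1 ≤ d i) (hk : d 0 + d 1 ≤ k) : coeff d f = 0 := by
  set d' := d - Finsupp.single i 1 with hd'
  have happ : ∀ j, d' j = d j - (if i = j then 1 else 0) := by
    intro j; simp [hd', Finsupp.tsub_apply, Finsupp.single_apply]
  have hi2 : (i = 0 ∧ i ≠ 1) ∨ (i = 1 ∧ i ≠ 0) := by fin_cases i <;> simp
  have hsum : d' + Finsupp.single i 1 = d := by
    ext j
    rw [Finsupp.add_apply, Finsupp.single_apply, happ j]
    by_cases h : i = j
    · subst h; simp; omega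
    · simp [h]
  have h2 := coeff_pderiv i f d'
  rw [hsum] at h2
  have h3 : d' 0 + d' 1 < k := by
    have e0 := happ 0
    have e1 := happ 1
    rcases hi2 with ⟨h, h'⟩ | ⟨h, h'⟩ <;> subst h <;> simp at e0 e1 <;> omega
  rw [hf d' h3] at h2
  rcases mul_eq_zero.mp h2.symm with h | h
  · exfalso
    have : (0 : ℤ) ≤ (d' i : ℤ) := Int.natCast_nonneg _
    omega
  · exact h

lemma P_FF : P (FF p) p := by
  intro d hd
  rcases Nat.eq_zero_or_pos (d 0) with h0 | h0
  · rcases Nat.eq_zero_or_pos (d 1) with h1 | h1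
    · have hd0 : d = 0 := fin2_finsupp_eq_zero (by omega)
      subst hd0
      have := cc_FF p
      rwa [MvPolynomial.constantCoeff_eq] at this
    · exact coeff_eq_zero_of_pderiv 1 (FF p) (p - 1) (P_pd1 p) d h1 (by omega)
  · exact coeff_eq_zero_of_pderiv 0 (FF p) (p - 1) (P_pd0 p) d h0 (by omega)

end TruncLogAux

/-- For a commutative ring `R` of characteristic `p` and `m ≤ p`, the truncated
logarithm is a homomorphism from the 1-units `1 + t·R[t]/(t^m)` to the additive
group: `log((1+z)(1+w)) = log(1+z) + log(1+w)`, i.e.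
`log(1 + (z + w + zw)) = log(1+z) + log(1+w)` for `z, w ∈ (t)`. -/
theorem truncLog_mul [Fact p.Prime] (hm : m ≤ p)
    (z w : TruncPoly m R)
    (hz : z ∈ Ideal.span {truncT m R}) (hw : w ∈ Ideal.span {truncT m R}) :
    truncLog p m R (z + w + z * w) = truncLog p m R z + truncLog p m R w := by
  classical
  have hp : p.Prime := Fact.out
  set c : ℕ := (p - 1).factorial with hc
  set φ : TruncLogAux.A →ₐ[ℤ] (TruncPoly m R) := MvPolynomial.aeval ![z, w] with hφ
  -- powers of z and w of total degree ≥ p vanish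
  have ht : (truncT m R) ^ m = 0 := by
    rw [truncT, ← map_pow]
    exact Ideal.Quotient.eq_zero_iff_mem.mpr (Ideal.subset_span rfl)
  have hzero : ∀ i j : ℕ, p ≤ i + j → z ^ i * w ^ j = 0 := by
    intro i j hij
    obtain ⟨a, ha⟩ := Ideal.mem_span_singleton'.mp hz
    obtain ⟨b, hb⟩ := Ideal.mem_span_singleton'.mp hw
    have h1 : (truncT m R) ^ (i + j) = 0 := by
      rw [show i + j = m + (i + j - m) by omega, pow_add, ht, zero_mul]
    rw [← ha, ← hb, mul_pow, mul_pow,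
      show a ^ i * (truncT m R) ^ i * (b ^ j * (truncT m R) ^ j)
        = a ^ i * b ^ j * ((truncT m R) ^ i * (truncT m R) ^ j) by ring,
      ← pow_add, h1, mul_zero]
  -- φ kills FF
  have hFF : φ (TruncLogAux.FF p) = 0 := by
    rw [MvPolynomial.as_sum (TruncLogAux.FF p), map_sum]
    apply Finset.sum_eq_zero
    intro v hv
    have hv' : p ≤ v 0 + v 1 := by
      by_contra hlt
      exact (MvPolynomial.mem_support_iff.mp hv) (TruncLogAux.P_FF p v (by omega))
    rw [MvPolynomial.aeval_monomial, Finsupp.prod_fintype _ _ (fun i => pow_zero _),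
      Fin.prod_univ_two]
    simp only [Matrix.cons_val_zero, Matrix.cons_val_one, Matrix.head_cons]
    rw [hzero (v 0) (v 1) hv', mul_zero]
  -- φ of Lo is c times truncLog
  have hLo : ∀ u : TruncLogAux.A, φ (TruncLogAux.Lo p u)
      = (c : TruncPoly m R) * truncLog p m R (φ u) := by
    intro u
    rw [TruncLogAux.Lo, map_sum, truncLog, Finset.mul_sum]
    apply Finset.sum_congr rfl
    intro n hn
    rw [Finset.mem_Ico] at hn
    have hdvd : n ∣ c := Nat.dvd_factorial (by omega) (by omega)
    have hn0 : (n : ZMod p) ≠ 0 := by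
      rw [Ne, ZMod.natCast_eq_zero_iff]
      intro hdvd'
      have := Nat.le_of_dvd (by omega) hdvd'
      omega
    have hninv : (n : ZMod p) * (n : ZMod p)⁻¹ = 1 := mul_inv_cancel₀ hn0
    have hkey : ((c / n : ℕ) : TruncPoly m R)
        = (c : TruncPoly m R) * zmodToTrunc p m R ((n : ZMod p)⁻¹) := by
      have h1 : ((c : ℕ) : TruncPoly m R)
          = ((c / n : ℕ) : TruncPoly m R) * ((n : ℕ) : TruncPoly m R) := by
        rw [← Nat.cast_mul, Nat.div_mul_cancel hdvd]
      rw [h1, mul_assoc, ← map_natCast (zmodToTrunc p m R) n, ← map_mul, hninv,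
        map_one, mul_one]
    rw [map_mul, map_pow]
    have hC : φ (MvPolynomial.C ((-1 : ℤ) ^ (n + 1) * ((c / n : ℕ) : ℤ)))
        = (-1 : TruncPoly m R) ^ (n + 1) * ((c / n : ℕ) : TruncPoly m R) := by
      rw [MvPolynomial.aeval_C, map_mul, map_pow, map_neg, map_one, map_natCast]
    rw [hC, hkey]
    ring
  -- evaluate φ on the variables
  have hφZ : φ TruncLogAux.ZZ = z + w + z * w := by
    simp [TruncLogAux.ZZ, TruncLogAux.XX, TruncLogAux.YY, hφ]
  have hφX : φ TruncLogAux.XX = z := by simp [TruncLogAux.XX, hφ]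
  have hφY : φ TruncLogAux.YY = w := by simp [TruncLogAux.YY, hφ]
  rw [TruncLogAux.FF, map_sub, map_sub, hLo, hLo, hLo, hφZ, hφX, hφY] at hFF
  -- c is a unit in T
  have hcu : IsUnit (c : TruncPoly m R) := by
    rw [show ((c : ℕ) : TruncPoly m R) = zmodToTrunc p m R ((c : ℕ) : ZMod p) from
      (map_natCast _ _).symm]
    apply IsUnit.map
    apply isUnit_iff_ne_zero.mpr
    rw [Ne, ZMod.natCast_eq_zero_iff]
    rw [hp.dvd_factorial]
    have := hp.two_le
    omega
  have hfinal : (c : TruncPoly m R) * (truncLog p m R (z + w + z * w)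
      - (truncLog p m R z + truncLog p m R w)) = 0 := by
    linear_combination hFF
  exact sub_eq_zero.mp ((hcu.mul_right_eq_zero).mp hfinal)
end

section
/- Let R be a ring without ℤ-torsion and σ the unique continuous R[[t]]-algebra automorphism of R((s))[[t]] with σ(s) = s + x·t^w, where x ∈ R((s)) and w ≥ 1. Then for every f ∈ R((s)), σ(f) = ∑_{0 ≤ i} (x t^w)^i f^{(i)} / i!, viewed in R_ℚ((s))[[t]] (where f^{(i)} denotes the i-th derivative with respect to s). -/
noncomputable section

/-- The derivative `d/ds` on formal Laurent series, `(∑ aₙ sⁿ)' = ∑ n aₙ sⁿ⁻¹`. -/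
noncomputable def lderiv {R : Type*} [CommRing R] (f : LaurentSeries R) : LaurentSeries R where
  coeff n := (n + 1 : ℤ) • f.coeff (n + 1)
  isPWO_support' := by
    refine Set.IsPWO.mono
      (Set.IsPWO.image_of_monotone f.isPWO_support
        (f := fun n : ℤ => n - 1) (fun x y h => by simpa using sub_le_sub_right h 1)) ?_
    intro n hn
    have : f.coeff (n + 1) ≠ 0 := by
      intro h0
      simp [Function.mem_support, h0] at hn
    exact ⟨n + 1, this, by ring⟩

variable (R : Type*) [CommRing R]

/-- The variable `s` of `R((s))`. -/
noncomputable def sVar : LaurentSeries R := HahnSeries.single (1 : ℤ) (1 : R)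

/-- The embedding `R((s)) → R((s))[[t]]` as constants in `t`. -/
noncomputable def embS : LaurentSeries R →+* PowerSeries (LaurentSeries R) :=
  PowerSeries.C

/-- The embedding `R[[t]] → R((s))[[t]]`. -/
noncomputable def embT : PowerSeries R →+* PowerSeries (LaurentSeries R) :=
  PowerSeries.map (HahnSeries.C : R →+* LaurentSeries R)

/-- Truncation of a power series in `s` to its first `M` terms. -/
noncomputable def sTrunc (M : ℕ) (f : PowerSeries R) : PowerSeries R :=
  PowerSeries.mk fun n => if n < M then PowerSeries.coeff n f else 0

/-- `t`-adic/coefficientwise continuity of a ring endomorphism `σ` of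
`R((s))[[t]]`: each coefficient of `σ(f)` for `f ∈ R[[s]]` is the limit of the
corresponding coefficients of `σ` applied to the polynomial truncations of `f`. -/
def SigmaContinuous (σ : PowerSeries (LaurentSeries R) →+* PowerSeries (LaurentSeries R)) :
    Prop :=
  ∀ (f : PowerSeries R) (n : ℕ) (j : ℤ), ∃ N : ℕ, ∀ M : ℕ, N ≤ M →
    (PowerSeries.coeff n
        (σ (embS R (HahnSeries.ofPowerSeries ℤ R (sTrunc R M f))))).coeff j =
      (PowerSeries.coeff n
        (σ (embS R (HahnSeries.ofPowerSeries ℤ R f)))).coeff j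

end

noncomputable section

/-! ### Auxiliary lemmas on `lderiv` -/

namespace SigmaTaylorAux

variable {A : Type*} [CommRing A]

lemma lderiv_coeff (f : LaurentSeries A) (n : ℤ) :
    (lderiv f).coeff n = (n + 1 : ℤ) • f.coeff (n + 1) := rfl

lemma lderiv_support_subset (f : LaurentSeries A) :
    (lderiv f).support ⊆ (fun m : ℤ => m - 1) '' f.support := by
  intro n hn
  have : f.coeff (n + 1) ≠ 0 := fun h0 => by
    simp [Function.mem_support, lderiv_coeff, h0] at hn
  exact ⟨n + 1, this, by ring⟩

lemma lderiv_add (f g : LaurentSeries A) : lderiv (f + g) = lderiv f + lderiv g := by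
  ext n; simp [lderiv_coeff, smul_add]

lemma lderiv_zero : lderiv (0 : LaurentSeries A) = 0 := by
  ext n; simp [lderiv_coeff]

lemma lderiv_C (r : A) : lderiv (HahnSeries.C r : LaurentSeries A) = 0 := by
  ext n
  rw [lderiv_coeff]
  rcases eq_or_ne (n + 1) 0 with h | h
  · rw [h, zero_smul, HahnSeries.coeff_zero]
  · rw [HahnSeries.C_apply, HahnSeries.coeff_single_of_ne h, smul_zero, HahnSeries.coeff_zero]

lemma lderiv_one : lderiv (1 : LaurentSeries A) = 0 := by
  rw [← HahnSeries.C_one, lderiv_C]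

lemma lderiv_sVar : lderiv (sVar A) = 1 := by
  ext n
  rw [lderiv_coeff, sVar]
  rcases eq_or_ne n 0 with rfl | h
  · simp
  · rw [HahnSeries.coeff_single_of_ne (by omega), smul_zero, HahnSeries.coeff_one, if_neg h]

/-- Coefficients of a product, summed over enlarged (PWO) index sets. -/
lemma mul_coeff_superset {f g : LaurentSeries A} {S T : Set ℤ} (hS : S.IsPWO) (hT : T.IsPWO)
    (hfS : f.support ⊆ S) (hgT : g.support ⊆ T) (a : ℤ) :
    (f * g).coeff a = ∑ ij ∈ Finset.antidiagonal hS hT a, f.coeff ij.1 * g.coeff ij.2 := by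
  rw [HahnSeries.coeff_mul]
  refine Finset.sum_subset (fun ij hij => ?_) (fun ij hij hij' => ?_)
  · rw [Finset.mem_antidiagonal] at hij ⊢
    exact ⟨hfS hij.1, hgT hij.2.1, hij.2.2⟩
  · rw [Finset.mem_antidiagonal] at hij hij'
    by_cases h1 : f.coeff ij.1 = 0
    · rw [h1, zero_mul]
    by_cases h2 : g.coeff ij.2 = 0
    · rw [h2, mul_zero]
    exact absurd ⟨h1, h2, hij.2.2⟩ hij'

/-- The Leibniz rule for `lderiv`. -/
lemma lderiv_mul (f g : LaurentSeries A) :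
    lderiv (f * g) = lderiv f * g + f * lderiv g := by
  ext n
  have hSf : ((fun m : ℤ => m - 1) '' f.support).IsPWO :=
    Set.IsPWO.image_of_monotone f.isPWO_support (fun x y h => by simpa using sub_le_sub_right h 1)
  have hSg : ((fun m : ℤ => m - 1) '' g.support).IsPWO :=
    Set.IsPWO.image_of_monotone g.isPWO_support (fun x y h => by simpa using sub_le_sub_right h 1)
  have h1 : (lderiv f * g).coeff n =
      ∑ ij ∈ Finset.antidiagonal f.isPWO_support g.isPWO_support (n + 1),
        (ij.1 : ℤ) • (f.coeff ij.1 * g.coeff ij.2) := by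
    rw [mul_coeff_superset hSf g.isPWO_support (lderiv_support_subset f) subset_rfl n]
    refine Finset.sum_nbij' (fun ij => (ij.1 + 1, ij.2)) (fun ij => (ij.1 - 1, ij.2))
      ?_ ?_ ?_ ?_ ?_
    · rintro ⟨i, j⟩ hij
      rw [Finset.mem_antidiagonal] at hij ⊢
      obtain ⟨⟨i', hi', hii⟩, hj, hsum⟩ := hij
      simp only at hii hsum
      refine ⟨?_, hj, by dsimp; omega⟩
      have : i + 1 = i' := by omega
      dsimp
      rwa [this]
    · rintro ⟨i, j⟩ hij
      rw [Finset.mem_antidiagonal] at hij ⊢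
      exact ⟨⟨i, hij.1, rfl⟩, hij.2.1, by dsimp at *; omega⟩
    · rintro ⟨i, j⟩ _ ; simp
    · rintro ⟨i, j⟩ _ ; simp
    · rintro ⟨i, j⟩ _
      dsimp
      rw [lderiv_coeff, smul_mul_assoc]
  have h2 : (f * lderiv g).coeff n =
      ∑ ij ∈ Finset.antidiagonal f.isPWO_support g.isPWO_support (n + 1),
        (ij.2 : ℤ) • (f.coeff ij.1 * g.coeff ij.2) := by
    rw [mul_coeff_superset f.isPWO_support hSg subset_rfl (lderiv_support_subset g) n]
    refine Finset.sum_nbij' (fun ij => (ij.1, ij.2 + 1)) (fun ij => (ij.1, ij.2 - 1))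
      ?_ ?_ ?_ ?_ ?_
    · rintro ⟨i, j⟩ hij
      rw [Finset.mem_antidiagonal] at hij ⊢
      obtain ⟨hi, ⟨j', hj', hjj⟩, hsum⟩ := hij
      simp only at hjj hsum
      refine ⟨hi, ?_, by dsimp; omega⟩
      have : j + 1 = j' := by omega
      dsimp
      rwa [this]
    · rintro ⟨i, j⟩ hij
      rw [Finset.mem_antidiagonal] at hij ⊢
      exact ⟨hij.1, ⟨j, hij.2.1, rfl⟩, by dsimp at *; omega⟩
    · rintro ⟨i, j⟩ _ ; simp
    · rintro ⟨i, j⟩ _ ; simp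
    · rintro ⟨i, j⟩ _
      dsimp
      rw [lderiv_coeff, mul_smul_comm]
  rw [HahnSeries.coeff_add, h1, h2, lderiv_coeff, HahnSeries.coeff_mul, Finset.smul_sum,
    ← Finset.sum_add_distrib]
  refine Finset.sum_congr rfl fun ij hij => ?_
  rw [Finset.mem_antidiagonal] at hij
  rw [← add_smul]
  rw [show ij.1 + ij.2 = n + 1 from hij.2.2]

/-- `lderiv` as an additive monoid hom. -/
def lderivHom : LaurentSeries A →+ LaurentSeries A :=
  { toFun := lderiv, map_zero' := lderiv_zero, map_add' := lderiv_add }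

lemma lderiv_iter_add (k : ℕ) (f g : LaurentSeries A) :
    lderiv^[k] (f + g) = lderiv^[k] f + lderiv^[k] g := by
  induction k generalizing f g with
  | zero => rfl
  | succ k ih => simp only [Function.iterate_succ_apply, lderiv_add, ih]

lemma lderiv_iter_zero (k : ℕ) : lderiv^[k] (0 : LaurentSeries A) = 0 := by
  induction k with
  | zero => rfl
  | succ k ih => rw [Function.iterate_succ_apply, lderiv_zero, ih]

lemma lderiv_iter_sub (k : ℕ) (f g : LaurentSeries A) :
    lderiv^[k] (f - g) = lderiv^[k] f - lderiv^[k] g := by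
  have h := lderiv_iter_add k (f - g) g
  rw [sub_add_cancel] at h
  rw [h]; abel

/-- Iterated derivatives kill low-order coefficients in a controlled way. -/
lemma lderiv_iter_coeff_eq_zero {y : LaurentSeries A} {c : ℤ}
    (hy : ∀ m : ℤ, m < c → y.coeff m = 0) (k : ℕ) :
    ∀ m : ℤ, m < c - k → (lderiv^[k] y).coeff m = 0 := by
  induction k with
  | zero => intro m hm; exact hy m (by push_cast at hm; omega)
  | succ k ih =>
    intro m hm
    rw [Function.iterate_succ_apply', lderiv_coeff, ih (m + 1) (by push_cast at hm ⊢; omega),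
      smul_zero]

/-- If all coefficients of `y` below `M` vanish, then so does any coefficient of `v * y`
below `v.order + M`. -/
lemma coeff_mul_eq_zero {v y : LaurentSeries A} {j M : ℤ}
    (hy : ∀ m : ℤ, m < M → y.coeff m = 0) (hj : j < v.order + M) : (v * y).coeff j = 0 := by
  rw [HahnSeries.coeff_mul]
  refine Finset.sum_eq_zero fun ij hij => ?_
  rw [Finset.mem_antidiagonal] at hij
  obtain ⟨h1, h2, h3⟩ := hij
  exfalso
  have hv : v.order ≤ ij.1 := HahnSeries.order_le_of_coeff_ne_zero h1
  have hM : M ≤ ij.2 := by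
    by_contra hMc
    exact h2 (hy ij.2 (by omega))
  omega

variable {K : Type*} [CommRing K] [Algebra ℚ K]

lemma qsmul_support_subset (c : ℚ) (f : LaurentSeries K) : (c • f).support ⊆ f.support := by
  intro n hn
  rw [HahnSeries.mem_support] at hn ⊢
  rw [HahnSeries.coeff_smul] at hn
  exact fun h => hn (by rw [h, smul_zero])

lemma qsmul_mul (c : ℚ) (f g : LaurentSeries K) : (c • f) * g = c • (f * g) := by
  ext n
  rw [HahnSeries.coeff_smul,
    mul_coeff_superset f.isPWO_support g.isPWO_support (qsmul_support_subset c f) subset_rfl n,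
    HahnSeries.coeff_mul, Finset.smul_sum]
  exact Finset.sum_congr rfl fun ij _ => by rw [HahnSeries.coeff_smul, smul_mul_assoc]

lemma mul_qsmul (c : ℚ) (f g : LaurentSeries K) : f * (c • g) = c • (f * g) := by
  rw [mul_comm, qsmul_mul, mul_comm]

lemma lderiv_qsmul (c : ℚ) (f : LaurentSeries K) : lderiv (c • f) = c • lderiv f := by
  ext n
  rw [lderiv_coeff, HahnSeries.coeff_smul, HahnSeries.coeff_smul, lderiv_coeff, smul_comm]

/-- Divided iterated derivative `f^{(k)}/k!`. -/
noncomputable def ederiv (k : ℕ) (f : LaurentSeries K) : LaurentSeries K :=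
  (k.factorial : ℚ)⁻¹ • lderiv^[k] f

lemma ederiv_zero (f : LaurentSeries K) : ederiv 0 f = f := by
  simp [ederiv]

lemma ederiv_add (k : ℕ) (f g : LaurentSeries K) :
    ederiv k (f + g) = ederiv k f + ederiv k g := by
  rw [ederiv, ederiv, ederiv, lderiv_iter_add, smul_add]

lemma ederiv_sub (k : ℕ) (f g : LaurentSeries K) :
    ederiv k (f - g) = ederiv k f - ederiv k g := by
  rw [ederiv, ederiv, ederiv, lderiv_iter_sub, smul_sub]

lemma ederiv_zero' (k : ℕ) : ederiv k (0 : LaurentSeries K) = 0 := by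
  rw [ederiv, lderiv_iter_zero, smul_zero]

lemma lderiv_ederiv (k : ℕ) (f : LaurentSeries K) :
    lderiv (ederiv k f) = ((k : ℚ) + 1) • ederiv (k + 1) f := by
  rw [ederiv, ederiv, lderiv_qsmul, ← Function.iterate_succ_apply' lderiv, smul_smul]
  have hc : ((k.factorial : ℚ))⁻¹ = ((k : ℚ) + 1) * (((k+1).factorial : ℚ))⁻¹ := by
    rw [Nat.factorial_succ, Nat.cast_mul, mul_inv, ← mul_assoc]
    have : ((k:ℚ) + 1) ≠ 0 := by positivity
    rw [show ((k+1 : ℕ) : ℚ) = (k : ℚ) + 1 by push_cast; ring, mul_inv_cancel₀ this, one_mul]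
  rw [← hc]

lemma ederiv_succ (k : ℕ) (f : LaurentSeries K) :
    ederiv (k + 1) f = ((k : ℚ) + 1)⁻¹ • lderiv (ederiv k f) := by
  rw [lderiv_ederiv, smul_smul, inv_mul_cancel₀ (by positivity), one_smul]

/-- Iterated Leibniz rule in divided-power form. -/
lemma ederiv_mul (k : ℕ) (f g : LaurentSeries K) :
    ederiv k (f * g) = ∑ p ∈ Finset.HasAntidiagonal.antidiagonal k, ederiv p.1 f * ederiv p.2 g := by
  induction k generalizing f g with
  | zero => simp [ederiv_zero]
  | succ k ih =>
    have hsum : lderiv (∑ p ∈ Finset.HasAntidiagonal.antidiagonal k, ederiv p.1 f * ederiv p.2 g) =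
        ∑ p ∈ Finset.HasAntidiagonal.antidiagonal k,
          (lderiv (ederiv p.1 f) * ederiv p.2 g + ederiv p.1 f * lderiv (ederiv p.2 g)) := by
      rw [show (lderiv : LaurentSeries K → LaurentSeries K) = lderivHom from rfl, map_sum]
      exact Finset.sum_congr rfl fun p _ => lderiv_mul _ _
    rw [ederiv_succ, ih, hsum]
    have e1 : ∑ p ∈ Finset.HasAntidiagonal.antidiagonal k,
        (lderiv (ederiv p.1 f) * ederiv p.2 g + ederiv p.1 f * lderiv (ederiv p.2 g)) =
        ∑ p ∈ Finset.HasAntidiagonal.antidiagonal k,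
          (((p.1 : ℚ) + 1) • (ederiv (p.1 + 1) f * ederiv p.2 g) +
           ((p.2 : ℚ) + 1) • (ederiv p.1 f * ederiv (p.2 + 1) g)) := by
      refine Finset.sum_congr rfl fun p _ => ?_
      rw [lderiv_ederiv, lderiv_ederiv, qsmul_mul, mul_qsmul]
    rw [e1, Finset.sum_add_distrib]
    have e2 : ∑ p ∈ Finset.HasAntidiagonal.antidiagonal k,
        ((p.1 : ℚ) + 1) • (ederiv (p.1 + 1) f * ederiv p.2 g) =
        ∑ p ∈ Finset.HasAntidiagonal.antidiagonal (k + 1), (p.1 : ℚ) • (ederiv p.1 f * ederiv p.2 g) := by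
      rw [Finset.Nat.sum_antidiagonal_succ
        (f := fun p => (p.1 : ℚ) • (ederiv p.1 f * ederiv p.2 g))]
      simp
    have e3 : ∑ p ∈ Finset.HasAntidiagonal.antidiagonal k,
        ((p.2 : ℚ) + 1) • (ederiv p.1 f * ederiv (p.2 + 1) g) =
        ∑ p ∈ Finset.HasAntidiagonal.antidiagonal (k + 1), (p.2 : ℚ) • (ederiv p.1 f * ederiv p.2 g) := by
      rw [Finset.Nat.sum_antidiagonal_succ'
        (f := fun p => (p.2 : ℚ) • (ederiv p.1 f * ederiv p.2 g))]
      simp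
    rw [e2, e3, ← Finset.sum_add_distrib]
    have e4 : ∀ p ∈ Finset.HasAntidiagonal.antidiagonal (k + 1),
        (p.1 : ℚ) • (ederiv p.1 f * ederiv p.2 g) + (p.2 : ℚ) • (ederiv p.1 f * ederiv p.2 g) =
        ((k : ℚ) + 1) • (ederiv p.1 f * ederiv p.2 g) := by
      intro p hp
      rw [← add_smul]
      congr 1
      rw [Finset.HasAntidiagonal.mem_antidiagonal] at hp
      rw [← Nat.cast_add, hp]
      push_cast
      ring
    rw [Finset.sum_congr rfl e4, ← Finset.smul_sum, smul_smul,
      inv_mul_cancel₀ (by positivity : ((k:ℚ)+1) ≠ 0), one_smul]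

lemma ederiv_one_of_pos {k : ℕ} (hk : 0 < k) : ederiv k (1 : LaurentSeries K) = 0 := by
  cases k with
  | zero => omega
  | succ k =>
    rw [ederiv, Function.iterate_succ_apply, lderiv_one, lderiv_iter_zero, smul_zero]

lemma ederiv_C_of_pos {k : ℕ} (hk : 0 < k) (c : K) :
    ederiv k (HahnSeries.C c : LaurentSeries K) = 0 := by
  cases k with
  | zero => omega
  | succ k =>
    rw [ederiv, Function.iterate_succ_apply, lderiv_C, lderiv_iter_zero, smul_zero]

/-! ### The Taylor-expansion map `tfun` -/

variable (w : ℕ)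

/-- The candidate Taylor expansion `f ↦ ∑ tⁿ uⁿ/ʷ f⁽ⁿ/ʷ⁾/(n/w)!`. -/
noncomputable def tfun (u F : LaurentSeries K) : PowerSeries (LaurentSeries K) :=
  PowerSeries.mk fun n => if w ∣ n then u ^ (n / w) * ederiv (n / w) F else 0

variable {w}

lemma tfun_one (hw : 0 < w) (u : LaurentSeries K) : tfun w u 1 = 1 := by
  refine PowerSeries.ext fun n => ?_
  rw [tfun, PowerSeries.coeff_mk, PowerSeries.coeff_one]
  rcases eq_or_ne n 0 with rfl | hn
  · rw [if_pos (dvd_zero w), if_pos rfl, Nat.zero_div, pow_zero, ederiv_zero, one_mul]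
  · rw [if_neg hn]
    by_cases hdvd : w ∣ n
    · have hk : 0 < n / w := Nat.div_pos (Nat.le_of_dvd (Nat.pos_of_ne_zero hn) hdvd) hw
      rw [if_pos hdvd, ederiv_one_of_pos hk, mul_zero]
    · rw [if_neg hdvd]

lemma tfun_zero (u : LaurentSeries K) : tfun w u 0 = 0 := by
  refine PowerSeries.ext fun n => ?_
  rw [tfun, PowerSeries.coeff_mk, map_zero]
  by_cases hdvd : w ∣ n
  · rw [if_pos hdvd, ederiv_zero', mul_zero]
  · rw [if_neg hdvd]

lemma tfun_add (u F G : LaurentSeries K) : tfun w u (F + G) = tfun w u F + tfun w u G := by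
  refine PowerSeries.ext fun n => ?_
  rw [map_add, tfun, tfun, tfun, PowerSeries.coeff_mk, PowerSeries.coeff_mk,
    PowerSeries.coeff_mk]
  by_cases hdvd : w ∣ n
  · rw [if_pos hdvd, if_pos hdvd, if_pos hdvd, ederiv_add, mul_add]
  · rw [if_neg hdvd, if_neg hdvd, if_neg hdvd, add_zero]

lemma tfun_mul (hw : 0 < w) (u F G : LaurentSeries K) :
    tfun w u (F * G) = tfun w u F * tfun w u G := by
  refine PowerSeries.ext fun n => ?_
  rw [PowerSeries.coeff_mul, tfun, tfun, tfun, PowerSeries.coeff_mk]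
  simp only [PowerSeries.coeff_mk]
  by_cases hdvd : w ∣ n
  · obtain ⟨k, hk⟩ := hdvd
    have hnw : n / w = k := by rw [hk, Nat.mul_div_cancel_left k hw]
    rw [if_pos ⟨k, hk⟩, hnw]
    have hsplit : ∑ p ∈ Finset.HasAntidiagonal.antidiagonal n,
        (if w ∣ p.1 then u ^ (p.1 / w) * ederiv (p.1 / w) F else 0) *
        (if w ∣ p.2 then u ^ (p.2 / w) * ederiv (p.2 / w) G else 0) =
        ∑ q ∈ Finset.HasAntidiagonal.antidiagonal k,
          (u ^ q.1 * ederiv q.1 F) * (u ^ q.2 * ederiv q.2 G) := by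
      rw [← Finset.sum_filter_add_sum_filter_not (Finset.HasAntidiagonal.antidiagonal n)
        (fun p => w ∣ p.1 ∧ w ∣ p.2)]
      have h0 : ∑ p ∈ (Finset.HasAntidiagonal.antidiagonal n).filter (fun p => ¬(w ∣ p.1 ∧ w ∣ p.2)),
          (if w ∣ p.1 then u ^ (p.1 / w) * ederiv (p.1 / w) F else 0) *
          (if w ∣ p.2 then u ^ (p.2 / w) * ederiv (p.2 / w) G else 0) = 0 := by
        refine Finset.sum_eq_zero fun p hp => ?_
        rw [Finset.mem_filter] at hp
        by_cases h1 : w ∣ p.1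
        · rw [if_neg (fun h2 => hp.2 ⟨h1, h2⟩), mul_zero]
        · rw [if_neg h1, zero_mul]
      rw [h0, add_zero]
      refine Finset.sum_nbij' (fun p => (p.1 / w, p.2 / w)) (fun q => (w * q.1, w * q.2))
        ?_ ?_ ?_ ?_ ?_
      · rintro ⟨a, b⟩ hp
        rw [Finset.mem_filter, Finset.HasAntidiagonal.mem_antidiagonal] at hp
        obtain ⟨hab, ⟨i, hi⟩, ⟨j, hj⟩⟩ := hp
        rw [Finset.HasAntidiagonal.mem_antidiagonal]
        dsimp
        subst hi hj
        rw [Nat.mul_div_cancel_left i hw, Nat.mul_div_cancel_left j hw]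
        have : w * i + w * j = w * k := by rw [← hk]; exact hab
        exact Nat.eq_of_mul_eq_mul_left hw (by rw [Nat.mul_add]; exact this)
      · rintro ⟨i, j⟩ hq
        rw [Finset.HasAntidiagonal.mem_antidiagonal] at hq
        rw [Finset.mem_filter, Finset.HasAntidiagonal.mem_antidiagonal]
        dsimp at hq ⊢
        exact ⟨by rw [← Nat.mul_add, hq, ← hk], ⟨i, rfl⟩, ⟨j, rfl⟩⟩
      · rintro ⟨a, b⟩ hp
        rw [Finset.mem_filter] at hp
        obtain ⟨-, ⟨i, hi⟩, ⟨j, hj⟩⟩ := hp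
        dsimp
        subst hi hj
        rw [Nat.mul_div_cancel_left i hw, Nat.mul_div_cancel_left j hw]
      · rintro ⟨i, j⟩ _
        dsimp
        rw [Nat.mul_div_cancel_left i hw, Nat.mul_div_cancel_left j hw]
      · rintro ⟨a, b⟩ hp
        rw [Finset.mem_filter] at hp
        obtain ⟨-, h1, h2⟩ := hp
        rw [if_pos h1, if_pos h2]
    rw [hsplit, ederiv_mul, Finset.mul_sum]
    refine Finset.sum_congr rfl fun q hq => ?_
    rw [Finset.HasAntidiagonal.mem_antidiagonal] at hq
    rw [← hq, pow_add]
    ring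
  · rw [if_neg hdvd]
    refine (Finset.sum_eq_zero fun p hp => ?_).symm
    rw [Finset.HasAntidiagonal.mem_antidiagonal] at hp
    by_cases h1 : w ∣ p.1
    · have h2 : ¬ w ∣ p.2 := fun h2 => hdvd (hp ▸ Nat.dvd_add h1 h2)
      rw [if_neg h2, mul_zero]
    · rw [if_neg h1, zero_mul]

/-- `tfun` as a ring homomorphism. -/
noncomputable def tring (hw : 0 < w) (u : LaurentSeries K) :
    LaurentSeries K →+* PowerSeries (LaurentSeries K) where
  toFun := tfun w u
  map_one' := tfun_one hw u
  map_mul' := tfun_mul hw u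
  map_zero' := tfun_zero u
  map_add' := tfun_add u

lemma tring_apply (hw : 0 < w) (u F : LaurentSeries K) :
    tring hw u F = tfun w u F := rfl

lemma tfun_C (u : LaurentSeries K) (hw : 0 < w) (c : K) :
    tfun w u (HahnSeries.C c) = PowerSeries.C (HahnSeries.C c) := by
  refine PowerSeries.ext fun n => ?_
  rw [tfun, PowerSeries.coeff_mk, PowerSeries.coeff_C]
  rcases eq_or_ne n 0 with rfl | hn
  · rw [if_pos (dvd_zero w), if_pos rfl, Nat.zero_div, pow_zero, ederiv_zero, one_mul]
  · rw [if_neg hn]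
    by_cases hdvd : w ∣ n
    · have hk : 0 < n / w := Nat.div_pos (Nat.le_of_dvd (Nat.pos_of_ne_zero hn) hdvd) hw
      rw [if_pos hdvd, ederiv_C_of_pos hk, mul_zero]
    · rw [if_neg hdvd]

lemma lderiv_iter_sVar {k : ℕ} (hk : 2 ≤ k) : lderiv^[k] (sVar K) = 0 := by
  obtain ⟨k', rfl⟩ : ∃ k', k = k' + 2 := ⟨k - 2, by omega⟩
  rw [show k' + 2 = (k' + 1) + 1 by ring, Function.iterate_succ_apply, lderiv_sVar,
    Function.iterate_succ_apply, lderiv_one, lderiv_iter_zero]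

lemma tfun_sVar (u : LaurentSeries K) (hw : 0 < w) :
    tfun w u (sVar K) = PowerSeries.C (sVar K) +
      PowerSeries.C u * (PowerSeries.X : PowerSeries (LaurentSeries K)) ^ w := by
  refine PowerSeries.ext fun n => ?_
  rw [tfun, PowerSeries.coeff_mk, map_add, PowerSeries.coeff_C, PowerSeries.coeff_C_mul,
    PowerSeries.coeff_X_pow]
  rcases eq_or_ne n 0 with rfl | hn
  · rw [if_pos (dvd_zero w), if_pos rfl, Nat.zero_div, pow_zero, ederiv_zero, one_mul,
      if_neg (by omega), mul_zero, add_zero]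
  · rw [if_neg hn]
    by_cases hdvd : w ∣ n
    · rw [if_pos hdvd]
      have hn' : n = w * (n / w) := (Nat.mul_div_cancel' hdvd).symm
      have hk : 0 < n / w := Nat.div_pos (Nat.le_of_dvd (Nat.pos_of_ne_zero hn) hdvd) hw
      by_cases hk1 : n / w = 1
      · have hnw : n = w := by rw [hn', hk1, mul_one]
        rw [hk1, if_pos hnw, ederiv, Nat.factorial_one, Nat.cast_one, inv_one, one_smul,
          Function.iterate_one, lderiv_sVar, pow_one, mul_one, zero_add]
      · have hk2 : 2 ≤ n / w := by omega
        have hnw : n ≠ w := by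
          intro h
          exact hk1 (by rw [h, Nat.div_self hw])
        rw [ederiv, lderiv_iter_sVar hk2, smul_zero, mul_zero, if_neg hnw, mul_zero, add_zero]
    · have hnw : n ≠ w := fun h => hdvd (by rw [h])
      rw [if_neg hdvd, if_neg hnw, mul_zero, add_zero]

end SigmaTaylorAux

open SigmaTaylorAux

/-- Taylor expansion formula (Lemma 5.1): let `R` be a ring without `ℤ`-torsion
and `σ` the (unique) continuous `R[[t]]`-algebra endomorphism of `R((s))[[t]]`
with `σ(s) = s + x t^w`, `w ≥ 1`. Then, viewed in `R_ℚ((s))[[t]]` (i.e. after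
applying the coefficientwise extension `κ` of an injective map `ι : R → K` into
a `ℚ`-algebra `K`), one has `σ(f) = ∑_{0 ≤ i} (x t^w)^i f^{(i)} / i!` for every
`f ∈ R((s))`. -/
theorem sigma_taylor_expansion {R : Type*} [CommRing R]
    (htf : ∀ (n : ℤ) (r : R), n • r = 0 → n = 0 ∨ r = 0)
    (w : ℕ) (hw : 1 ≤ w) (x : LaurentSeries R)
    (σ : PowerSeries (LaurentSeries R) →+* PowerSeries (LaurentSeries R))
    (hfix : ∀ g : PowerSeries R, σ (embT R g) = embT R g)
    (hs : σ (embS R (sVar R)) =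
      embS R (sVar R) + embS R x * (PowerSeries.X : PowerSeries (LaurentSeries R)) ^ w)
    (hcont : SigmaContinuous R σ)
    (K : Type*) [CommRing K] [Algebra ℚ K] (ι : R →+* K) (hι : Function.Injective ι)
    (κ : LaurentSeries R →+* LaurentSeries K)
    (hκ : ∀ (g : LaurentSeries R) (j : ℤ), (κ g).coeff j = ι (g.coeff j))
    (f : LaurentSeries R) (n : ℕ) :
    PowerSeries.coeff n (PowerSeries.map κ (σ (embS R f))) =
      if w ∣ n then
        ((n / w).factorial : ℚ)⁻¹ • ((κ x) ^ (n / w) * lderiv^[n / w] (κ f))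
      else 0 := by
  have hw0 : 0 < w := hw
  set u : LaurentSeries K := κ x with hu
  -- the two ring homomorphisms to compare
  set Lhom : LaurentSeries R →+* PowerSeries (LaurentSeries K) :=
    ((PowerSeries.map κ).comp (σ.comp (embS R))) with hLhom
  set Thom : LaurentSeries R →+* PowerSeries (LaurentSeries K) :=
    ((tring hw0 u).comp κ) with hThom
  have hLapp : ∀ F : LaurentSeries R, Lhom F = PowerSeries.map κ (σ (embS R F)) :=
    fun F => rfl
  have hTapp : ∀ F : LaurentSeries R, Thom F = tfun w u (κ F) := fun F => rfl
  have hembS : ∀ F : LaurentSeries R, embS R F = PowerSeries.C F :=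
    fun F => rfl
  -- κ of basic elements
  have hκC : ∀ r : R, κ (HahnSeries.C r) = HahnSeries.C (ι r) := by
    intro r
    apply HahnSeries.coeff_injective
    funext j
    rw [hκ, HahnSeries.C_apply, HahnSeries.C_apply]
    rcases eq_or_ne j 0 with rfl | hj
    · rw [HahnSeries.coeff_single_same, HahnSeries.coeff_single_same]
    · rw [HahnSeries.coeff_single_of_ne hj, HahnSeries.coeff_single_of_ne hj, map_zero]
  have hκs : κ (sVar R) = sVar K := by
    apply HahnSeries.coeff_injective
    funext j
    rw [hκ, sVar, sVar]
    rcases eq_or_ne j 1 with rfl | hj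
    · rw [HahnSeries.coeff_single_same, HahnSeries.coeff_single_same, map_one]
    · rw [HahnSeries.coeff_single_of_ne hj, HahnSeries.coeff_single_of_ne hj, map_zero]
  have hκsingle : ∀ m : ℤ, κ (HahnSeries.single m (1 : R)) = HahnSeries.single m (1 : K) := by
    intro m
    apply HahnSeries.coeff_injective
    funext j
    rw [hκ]
    rcases eq_or_ne j m with rfl | hj
    · rw [HahnSeries.coeff_single_same, HahnSeries.coeff_single_same, map_one]
    · rw [HahnSeries.coeff_single_of_ne hj, HahnSeries.coeff_single_of_ne hj, map_zero]
  -- agreement on constants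
  have hC : ∀ r : R, Lhom (HahnSeries.C r) = Thom (HahnSeries.C r) := by
    intro r
    have h1 : embT R (PowerSeries.C r) = embS R (HahnSeries.C r) := by
      rw [hembS]
      show PowerSeries.map (HahnSeries.C : R →+* LaurentSeries R) (PowerSeries.C r) = _
      rw [PowerSeries.map_C]
    have h2 : σ (embS R (HahnSeries.C r)) = embS R (HahnSeries.C r) := by
      rw [← h1, hfix]
    rw [hLapp, hTapp, h2, hembS, PowerSeries.map_C, hκC, tfun_C u hw0]
  -- agreement on the variable
  have hsvar : Lhom (sVar R) = Thom (sVar R) := by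
    rw [hLapp, hTapp, hs, hκs, tfun_sVar u hw0, map_add, map_mul, map_pow, hembS, hembS,
      PowerSeries.map_C, PowerSeries.map_C, PowerSeries.map_X, hκs, hu]
  -- agreement on powers of the variable
  have hpow : ∀ m : ℕ, Lhom (HahnSeries.single (m : ℤ) (1 : R)) =
      Thom (HahnSeries.single (m : ℤ) (1 : R)) := by
    intro m
    have h1 : HahnSeries.single (m : ℤ) (1 : R) = (sVar R) ^ m := by
      rw [sVar, HahnSeries.single_pow, one_pow, nsmul_eq_mul, mul_one]
    rw [h1, map_pow, map_pow, hsvar]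
  -- units
  have hTunit : ∀ m : ℕ, IsUnit (Thom (HahnSeries.single (m : ℤ) (1 : R))) := by
    intro m
    rw [PowerSeries.isUnit_iff_constantCoeff]
    have hc : PowerSeries.constantCoeff
        (Thom (HahnSeries.single (m : ℤ) (1 : R))) = HahnSeries.single (m : ℤ) (1 : K) := by
      rw [← PowerSeries.coeff_zero_eq_constantCoeff_apply, hTapp, hκsingle, tfun,
        PowerSeries.coeff_mk, if_pos (dvd_zero w), Nat.zero_div, pow_zero, ederiv_zero,
        one_mul]
    rw [hc]
    exact IsUnit.of_mul_eq_one (HahnSeries.single (-(m : ℤ)) (1 : K))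
      (by rw [HahnSeries.single_mul_single, add_neg_cancel, mul_one]; rfl)
  -- agreement on single d 1 for all integers d
  have hsingle : ∀ d : ℤ, Lhom (HahnSeries.single d (1 : R)) =
      Thom (HahnSeries.single d (1 : R)) := by
    intro d
    rcases le_or_gt 0 d with hd | hd
    · obtain ⟨m, rfl⟩ : ∃ m : ℕ, d = (m : ℤ) := ⟨d.toNat, (Int.toNat_of_nonneg hd).symm⟩
      exact hpow m
    · set m : ℕ := (-d).toNat with hm
      have hdm : d + (m : ℤ) = 0 := by
        rw [hm, Int.toNat_of_nonneg (by omega)]; ring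
      have hinv : HahnSeries.single d (1 : R) * HahnSeries.single (m : ℤ) (1 : R) = 1 := by
        rw [HahnSeries.single_mul_single, hdm, mul_one]; rfl
      have h1 : Lhom (HahnSeries.single d (1 : R)) * Lhom (HahnSeries.single (m : ℤ) (1 : R)) =
          1 := by rw [← map_mul, hinv, map_one]
      have h2 : Thom (HahnSeries.single d (1 : R)) * Thom (HahnSeries.single (m : ℤ) (1 : R)) =
          1 := by rw [← map_mul, hinv, map_one]
      rw [hpow m] at h1
      exact (hTunit m).mul_right_cancel (by rw [h1, h2])
  -- agreement on images of power series, via continuity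
  have hofP : ∀ g : PowerSeries R,
      Lhom (HahnSeries.ofPowerSeries ℤ R g) = Thom (HahnSeries.ofPowerSeries ℤ R g) := by
    intro g
    -- truncations are polynomials
    have hTruncEq : ∀ M : ℕ, (HahnSeries.ofPowerSeries ℤ R) (sTrunc R M g) =
        ∑ m ∈ Finset.range M, HahnSeries.C (PowerSeries.coeff m g) *
          HahnSeries.single (m : ℤ) (1 : R) := by
      intro M
      have h1 : sTrunc R M g = ∑ m ∈ Finset.range M,
          PowerSeries.C (PowerSeries.coeff m g) * (PowerSeries.X : PowerSeries R) ^ m := by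
        refine PowerSeries.ext fun j => ?_
        rw [sTrunc, PowerSeries.coeff_mk, map_sum]
        simp only [PowerSeries.coeff_C_mul, PowerSeries.coeff_X_pow, mul_ite, mul_one, mul_zero]
        rw [Finset.sum_ite_eq (Finset.range M) j (fun m => PowerSeries.coeff m g)]
        simp [Finset.mem_range]
      rw [h1, map_sum]
      refine Finset.sum_congr rfl fun m _ => ?_
      rw [map_mul, map_pow, HahnSeries.ofPowerSeries_C, HahnSeries.ofPowerSeries_X,
        HahnSeries.single_pow, one_pow, nsmul_eq_mul, mul_one]
    have hTrunc : ∀ M : ℕ, Lhom ((HahnSeries.ofPowerSeries ℤ R) (sTrunc R M g)) =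
        Thom ((HahnSeries.ofPowerSeries ℤ R) (sTrunc R M g)) := by
      intro M
      rw [hTruncEq M, map_sum, map_sum]
      refine Finset.sum_congr rfl fun m _ => ?_
      rw [map_mul, map_mul, hC, hsingle]
    -- coefficients of ofPowerSeries
    have hofCoeff : ∀ (h : PowerSeries R) (m : ℤ),
        (HahnSeries.ofPowerSeries ℤ R h).coeff m =
          if 0 ≤ m then PowerSeries.coeff m.toNat h else 0 := by
      intro h m
      split
      · next hm =>
        have hmm : m = ((m.toNat : ℕ) : ℤ) := by omega
        conv_lhs => rw [hmm]
        rw [HahnSeries.ofPowerSeries_apply_coeff h m.toNat]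
      · next hm =>
        rw [HahnSeries.ofPowerSeries_apply]
        apply HahnSeries.embDomain_notin_range
        rintro ⟨p, hp⟩
        have hpm : ((p : ℕ) : ℤ) = m := hp
        omega
    -- now compare coefficientwise
    refine PowerSeries.ext fun n => ?_
    apply HahnSeries.coeff_injective
    funext j
    obtain ⟨N, hN⟩ := hcont g n j
    set k : ℕ := n / w with hk
    set B : ℤ := (u ^ k).order with hB
    set M : ℕ := max N (k + (j - B + 1).toNat) with hM
    have hMN : N ≤ M := le_max_left _ _
    have hMj : (j : ℤ) < B + ((M : ℤ) - (k : ℤ)) := by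
      have h1 : (k + (j - B + 1).toNat : ℕ) ≤ M := le_max_right _ _
      have h2 : (j - B + 1 : ℤ) ≤ ((j - B + 1).toNat : ℤ) := Int.self_le_toNat _
      push_cast at h1
      omega
    -- the L side is stable under truncation
    have hLcoeff : ∀ F : LaurentSeries R, (PowerSeries.coeff n
        (Lhom F)).coeff j =
        ι ((PowerSeries.coeff n (σ (embS R F))).coeff j) := by
      intro F
      rw [hLapp, PowerSeries.coeff_map, hκ]
    have hLstab : (PowerSeries.coeff n
        (Lhom (HahnSeries.ofPowerSeries ℤ R g))).coeff j =
        (PowerSeries.coeff n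
          (Lhom ((HahnSeries.ofPowerSeries ℤ R) (sTrunc R M g)))).coeff j := by
      rw [hLcoeff, hLcoeff, hN M hMN]
    -- the T side is stable under truncation
    have hTcoeff : ∀ F : LaurentSeries R, PowerSeries.coeff n (Thom F) =
        if w ∣ n then u ^ k * ederiv k (κ F) else 0 := by
      intro F
      rw [hTapp, tfun, PowerSeries.coeff_mk, ← hk]
    have hTstab : (PowerSeries.coeff n
        (Thom ((HahnSeries.ofPowerSeries ℤ R) (sTrunc R M g)))).coeff j =
        (PowerSeries.coeff n
          (Thom (HahnSeries.ofPowerSeries ℤ R g))).coeff j := by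
      rw [hTcoeff, hTcoeff]
      by_cases hdvd : w ∣ n
      · rw [if_pos hdvd, if_pos hdvd]
        set F1 : LaurentSeries K := κ ((HahnSeries.ofPowerSeries ℤ R) (sTrunc R M g)) with hF1
        set F2 : LaurentSeries K := κ ((HahnSeries.ofPowerSeries ℤ R) g) with hF2
        have hd : ∀ m : ℤ, m < (M : ℤ) → (F2 - F1).coeff m = 0 := by
          intro m hm
          rw [HahnSeries.coeff_sub, hF1, hF2, hκ, hκ, hofCoeff, hofCoeff]
          by_cases h0 : 0 ≤ m
          · have hcast : ((m.toNat : ℕ) : ℤ) = m := Int.toNat_of_nonneg h0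
            rw [if_pos h0, if_pos h0, sTrunc, PowerSeries.coeff_mk, if_pos (by omega)]
            rw [sub_self]
          · rw [if_neg h0, if_neg h0, sub_self]
        have hzero : (u ^ k * (ederiv k F2 - ederiv k F1)).coeff j = 0 := by
          rw [← ederiv_sub, ederiv, mul_qsmul, HahnSeries.coeff_smul,
            coeff_mul_eq_zero (lderiv_iter_coeff_eq_zero hd k) (by rw [← hB]; push_cast; omega),
            smul_zero]
        rw [mul_sub, HahnSeries.coeff_sub] at hzero
        have := sub_eq_zero.mp hzero
        rw [this]
      · rw [if_neg hdvd, if_neg hdvd]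
    rw [hLstab, hTrunc M, hTstab]
  -- agreement everywhere
  have hgen : ∀ F : LaurentSeries R, Lhom F = Thom F := by
    intro F
    rcases eq_or_ne F 0 with rfl | hF
    · rw [map_zero, map_zero]
    · have hfac := F.single_order_mul_powerSeriesPart
      calc Lhom F = Lhom (HahnSeries.single F.order 1 *
              (HahnSeries.ofPowerSeries ℤ R) F.powerSeriesPart) := by
            rw [hfac]
        _ = Lhom (HahnSeries.single F.order 1) *
              Lhom ((HahnSeries.ofPowerSeries ℤ R) F.powerSeriesPart) := map_mul _ _ _
        _ = Thom (HahnSeries.single F.order 1) *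
              Thom ((HahnSeries.ofPowerSeries ℤ R) F.powerSeriesPart) := by
            rw [hsingle, hofP]
        _ = Thom (HahnSeries.single F.order 1 *
              (HahnSeries.ofPowerSeries ℤ R) F.powerSeriesPart) := (map_mul _ _ _).symm
        _ = Thom F := by rw [hfac]
  -- conclude
  have hmain : PowerSeries.coeff n (PowerSeries.map κ (σ (embS R f))) =
      PowerSeries.coeff n (Thom f) := by
    rw [← hgen f]; rfl
  rw [hmain, hTapp, tfun, PowerSeries.coeff_mk]
  by_cases hdvd : w ∣ n
  · rw [if_pos hdvd, if_pos hdvd, ederiv, mul_qsmul]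
  · rw [if_neg hdvd, if_neg hdvd]

end
end

section
/- Residue-transformation formula (case a+b < p, w | p-(a+b), max{a,b} < p-(a+b)): Let k be a field of characteristic p, w ≥ 2, x ∈ k, α, β ∈ k[[s]], a, b ≥ 1 with a+b < p and w | (p - (a+b)); set q = (p-(a+b))/w and suppose max{a,b} < p - (a+b). Writing α = ∑ αᵢ sⁱ, β = ∑ βⱼ s^j, one has res_{s=0} ( −(1/q)(x/s)^q (aα dβ − bβ dα) ) = x^q ∑_{i+j=q} (b + wj) αᵢ βⱼ, where the identity −(1/q)(aj − bi) = wj + b holds in 𝔽_p for i + j = q. -/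
open Finset

open PowerSeries

theorem lderiv_ofPowerSeries {R : Type*} [CommRing R] (f : R⟦X⟧) :
    lderiv (HahnSeries.ofPowerSeries ℤ R f) = HahnSeries.ofPowerSeries ℤ R (d⁄dX R f) := by
  ext (n | n)
  · show ((n : ℤ) + 1) • (HahnSeries.ofPowerSeries ℤ R f).coeff ((n + 1 : ℕ) : ℤ) =
      (HahnSeries.ofPowerSeries ℤ R (d⁄dX R f)).coeff (n : ℤ)
    rw [HahnSeries.ofPowerSeries_apply_coeff, HahnSeries.ofPowerSeries_apply_coeff,
      coeff_derivative, zsmul_eq_mul]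
    push_cast
    ring
  · show (Int.negSucc n + 1) • (HahnSeries.ofPowerSeries ℤ R f).coeff (Int.negSucc n + 1) = _
    rcases n with _ | n
    · simp [coeff_coe]
    · have : Int.negSucc (n + 1) + 1 < 0 := by omega
      simp [coeff_coe, this]

theorem ofPowerSeries_natCast_mul_lderiv_sub {R : Type*} [CommRing R] (a b : ℕ) (f g : R⟦X⟧) :
    (a : LaurentSeries R) * HahnSeries.ofPowerSeries ℤ R f *
        lderiv (HahnSeries.ofPowerSeries ℤ R g) -
      (b : LaurentSeries R) * HahnSeries.ofPowerSeries ℤ R g *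
        lderiv (HahnSeries.ofPowerSeries ℤ R f) =
      HahnSeries.ofPowerSeries ℤ R ((a : R⟦X⟧) * f * d⁄dX R g - (b : R⟦X⟧) * g * d⁄dX R f) := by
  simp only [lderiv_ofPowerSeries, map_sub, map_mul, map_natCast]

theorem coeff_mul_derivative {R : Type*} [CommSemiring R] (f g : R⟦X⟧) (n : ℕ) :
    coeff n (f * d⁄dX R g) =
      ∑ x ∈ antidiagonal (n + 1), (x.2 : R) * coeff x.1 f * coeff x.2 g := by
  rw [coeff_mul, Finset.Nat.sum_antidiagonal_succ']
  simp only [Nat.cast_zero, zero_mul, zero_add, coeff_derivative, Nat.cast_add, Nat.cast_one]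
  exact sum_congr rfl fun _ _ => by ring

theorem coeff_natCast_mul_derivative_sub {R : Type*} [CommRing R] (a b : ℕ) (f g : R⟦X⟧)
    (n : ℕ) :
    coeff n ((a : R⟦X⟧) * f * d⁄dX R g - (b : R⟦X⟧) * g * d⁄dX R f) =
      ∑ x ∈ antidiagonal (n + 1), ((a : R) * x.2 - b * x.1) * coeff x.1 f * coeff x.2 g := by
  rw [map_sub, mul_assoc, mul_assoc, ← map_natCast C a, ← map_natCast C b, coeff_C_mul,
    coeff_C_mul, coeff_mul_derivative g f, ← Finset.Nat.sum_antidiagonal_swap,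
    coeff_mul_derivative f g, mul_sum, mul_sum, ← sum_sub_distrib]
  exact sum_congr rfl fun _ _ => by simp only [Prod.fst_swap, Prod.snd_swap]; ring

theorem coeff_single_neg_mul_ofPowerSeries {R : Type*} [Semiring R] (r : R) (f : R⟦X⟧)
    {n : ℕ} (hn : n ≠ 0) :
    (HahnSeries.single (-(n : ℤ)) r * HahnSeries.ofPowerSeries ℤ R f).coeff (-1) =
      r * coeff (n - 1) f := by
  rw [show (-1 : ℤ) = ((n - 1 : ℕ) : ℤ) + -(n : ℤ) by omega, HahnSeries.coeff_single_mul_add,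
    HahnSeries.ofPowerSeries_apply_coeff]

theorem neg_inv_mul_sub_eq {K : Type*} [Field K] {a b w q i j : K} (hq : q ≠ 0)
    (hqw : q * w + (a + b) = 0) (hij : i + j = q) :
    -(q⁻¹ * (a * j - b * i)) = w * j + b := by
  rw [show a * j - b * i = q * -(w * j + b) by linear_combination j * hqw - b * hij,
    inv_mul_cancel_left₀ hq, neg_neg]

theorem natCast_neg_inv_mul_sub_eq {F : Type*} [Field F] (p : ℕ) [CharP F p] {w a b q : ℕ}
    (hw : 2 ≤ w) (hab : a + b < p) (hq : p - (a + b) = q * w) {i j : ℕ} (hij : i + j = q) :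
    -((q : F)⁻¹ * ((a : F) * j - b * i)) = w * j + b := by
  have hqw : 2 * q ≤ q * w := by rw [mul_comm]; exact Nat.mul_le_mul_left q hw
  have hq0 : q ≠ 0 := by rintro rfl; omega
  refine neg_inv_mul_sub_eq ?_ ?_ (by rw [← Nat.cast_add, hij])
  · -- `0 < 2 q ≤ p`, so `p ∤ q`
    rw [Ne, CharP.cast_eq_zero_iff F p]
    intro hdvd
    have := Nat.le_of_dvd (by omega) hdvd
    omega
  · have hp := CharP.cast_eq_zero F p
    rw [show p = q * w + (a + b) by omega] at hp
    exact_mod_cast hp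

theorem residue_transformation_case_i_general (p : ℕ)
    {k : Type*} [Field k] [CharP k p] (w a b q : ℕ) (hw : 2 ≤ w)
    (hab : a + b < p) (hq : p - (a + b) = q * w)
    (x : k) (α β : PowerSeries k) :
    (((-((q : k)⁻¹ * x ^ q)) •
          (HahnSeries.single (-(q : ℤ)) (1 : k) *
            ((a : LaurentSeries k) * HahnSeries.ofPowerSeries ℤ k α *
                lderiv (HahnSeries.ofPowerSeries ℤ k β) -
              (b : LaurentSeries k) * HahnSeries.ofPowerSeries ℤ k β *
                lderiv (HahnSeries.ofPowerSeries ℤ k α)))).coeff (-1 : ℤ) =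
        x ^ q * ∑ i ∈ Finset.range (q + 1),
          ((b : k) + (w : k) * ((q - i : ℕ) : k)) *
            PowerSeries.coeff i α * PowerSeries.coeff (q - i) β) ∧
      ∀ i j : ℕ, i + j = q →
        -((q : ZMod p)⁻¹ * ((a : ZMod p) * (j : ZMod p) - (b : ZMod p) * (i : ZMod p))) =
          (w : ZMod p) * (j : ZMod p) + (b : ZMod p) := by
  have hq0 : q ≠ 0 := by rintro rfl; omega
  have : NeZero p := ⟨by omega⟩
  -- makes `ZMod p` a field
  have := CharP.char_is_prime_of_pos k p
  refine ⟨?_, fun i j hij => natCast_neg_inv_mul_sub_eq p hw hab hq hij⟩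
  rw [ofPowerSeries_natCast_mul_lderiv_sub, HahnSeries.coeff_smul,
    coeff_single_neg_mul_ofPowerSeries _ _ hq0, one_mul, coeff_natCast_mul_derivative_sub,
    Nat.sub_add_cancel (Nat.one_le_iff_ne_zero.mpr hq0),
    Finset.Nat.sum_antidiagonal_eq_sum_range_succ_mk, smul_eq_mul, mul_sum, mul_sum]
  refine sum_congr rfl fun i hi => ?_
  have key := natCast_neg_inv_mul_sub_eq (F := k) p hw hab hq
    (Nat.add_sub_cancel' (mem_range_succ_iff.mp hi))
  linear_combination (x ^ q * coeff i α * coeff (q - i) β) * key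

/-- Case (i) of Lemma 6.1: residue-transformation formula. With `q = (p-(a+b))/w`
and `max{a,b} < p-(a+b)`, the residue at `s = 0` of the 1-form
`−(1/q)(x/s)^q (aα dβ − bβ dα)` equals `x^q ∑_{i+j=q} (b + wj) αᵢ βⱼ`;
the underlying identity `−(1/q)(aj − bi) = wj + b` holds in `𝔽_p` for `i+j = q`. -/
theorem residue_transformation_case_i (p : ℕ) (hp : p.Prime) (hp5 : 5 ≤ p)
    {k : Type*} [Field k] [CharP k p] (w a b q : ℕ) (hw : 2 ≤ w)
    (ha : 1 ≤ a) (hb : 1 ≤ b) (hab : a + b < p)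
    (hq : p - (a + b) = q * w) (hmax : max a b < p - (a + b))
    (x : k) (α β : PowerSeries k) :
    (((-((q : k)⁻¹ * x ^ q)) •
          (HahnSeries.single (-(q : ℤ)) (1 : k) *
            ((a : LaurentSeries k) * HahnSeries.ofPowerSeries ℤ k α *
                lderiv (HahnSeries.ofPowerSeries ℤ k β) -
              (b : LaurentSeries k) * HahnSeries.ofPowerSeries ℤ k β *
                lderiv (HahnSeries.ofPowerSeries ℤ k α)))).coeff (-1 : ℤ) =
        x ^ q * ∑ i ∈ Finset.range (q + 1),
          ((b : k) + (w : k) * ((q - i : ℕ) : k)) *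
            PowerSeries.coeff i α * PowerSeries.coeff (q - i) β) ∧
      ∀ i j : ℕ, i + j = q →
        -((q : ZMod p)⁻¹ * ((a : ZMod p) * (j : ZMod p) - (b : ZMod p) * (i : ZMod p))) =
          (w : ZMod p) * (j : ZMod p) + (b : ZMod p) :=
  residue_transformation_case_i_general p w a b q hw hab hq x α β
end

section
/- Let k be a field of characteristic p ≥ 5 and a, b ≥ 1 with a + b = p, a > b, and α, β ∈ k[[s]]. Define ℓ^(p) on Λ²(k[[t]]/(t^p))^× by ℓ^(p) = (1/2)∑_{1≤i<p} i · ℓ_{p-i} ∧ ℓ_i, where ℓ_i(u) is the t^i-coefficient of log(u/u(0)). Then ℓ^(p)(ē^{α(0)t^a} ∧ ē^{β(0)t^b}) = b·α(0)·β(0), and this equals res_{s=0}( α b β ds/s ) = res_{s=0} Ω^(p)(s ∧ ē^{αt^a} ∧ ē^{βt^b}). -/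
open Finset PowerSeries

variable (p : ℕ) {k : Type*} [Field k]

/-- Truncated logarithm `log(1+z) = ∑_{1 ≤ n < p} (-1)^{n+1} z^n / n`. -/
noncomputable def tlog (z : PowerSeries k) : PowerSeries k :=
  ∑ n ∈ Finset.Ico 1 p, ((-1 : k) ^ (n + 1) * (n : k)⁻¹) • z ^ n

/-- `ℓ_i(u)`: the `t^i`-coefficient of `log(u/u(0))`. -/
noncomputable def ell (i : ℕ) (u : PowerSeries k) : k :=
  PowerSeries.coeff (R := k) i
    (tlog p (PowerSeries.C (R := k) (PowerSeries.constantCoeff (R := k) u)⁻¹ * u - 1))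

/-- `ℓ^(p)(u ∧ v) = (1/2)∑_{1≤i<p} i·(ℓ_{p-i}(u)ℓ_i(v) − ℓ_{p-i}(v)ℓ_i(u))`. -/
noncomputable def ellp (u v : PowerSeries k) : k :=
  (2 : k)⁻¹ * ∑ i ∈ Finset.Ico 1 p,
    (i : k) * (ell p (p - i) u * ell p i v - ell p (p - i) v * ell p i u)

/-- Truncated exponential `ē^z = ∑_{0 ≤ n < p} z^n / n!`. -/
noncomputable def ee (z : PowerSeries k) : PowerSeries k :=
  ∑ n ∈ Finset.range p, ((n.factorial : k)⁻¹) • z ^ n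

/-!
Modulo `t^{2m}` one has `ē^{c t^m} ≡ 1 + c t^m` and `log(1 + w) ≡ w` whenever `t^m ∣ w`, so
`ℓ_i(ē^{c t^m})` is `c` for `i = m` and `0` for the other `i < 2m`. As `p < 2a`, only the terms
`i = b` and `i = a` survive in `ℓ^(p)(ē^{α(0)t^a} ∧ ē^{β(0)t^b})`, which collapses to
`½(b - a)α(0)β(0) = b·α(0)β(0)` because `a ≡ -b (mod p)`. The residue is the constant term of
`α·b·β`.
-/

lemma sq_dvd_tlog_sub_self (hp : 2 ≤ p) (w : PowerSeries k) : w ^ 2 ∣ tlog p w - w := by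
  rw [tlog, Finset.sum_eq_sum_Ico_succ_bot (by omega)]
  norm_num only [pow_one, one_smul, add_sub_cancel_left]
  exact Finset.dvd_sum fun n hn => dvd_smul_of_dvd _ (pow_dvd_pow w (Finset.mem_Ico.1 hn).1)

lemma sq_dvd_ee_sub_one_sub_self (hp : 2 ≤ p) (z : PowerSeries k) :
    z ^ 2 ∣ ee p z - 1 - z := by
  rw [ee, Finset.range_eq_Ico, Finset.sum_eq_sum_Ico_succ_bot (by omega),
    Finset.sum_eq_sum_Ico_succ_bot (by omega)]
  norm_num only [pow_zero, pow_one, one_smul, add_sub_cancel_left]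
  exact Finset.dvd_sum fun n hn => dvd_smul_of_dvd _ (pow_dvd_pow z (Finset.mem_Ico.1 hn).1)

lemma constantCoeff_ee (hp : 2 ≤ p) {z : PowerSeries k} (hz : constantCoeff z = 0) :
    constantCoeff (ee p z) = 1 := by
  obtain ⟨q, hq⟩ := sq_dvd_ee_sub_one_sub_self p hp z
  rw [show ee p z = 1 + z + z ^ 2 * q by rw [← hq]; ring]
  simp [hz]

lemma X_pow_dvd_tlog_ee_sub_one_sub (hp : 2 ≤ p) (c : k) (m : ℕ) :
    X ^ (2 * m) ∣ tlog p (ee p (C c * X ^ m) - 1) - C c * X ^ m := by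
  set z : PowerSeries k := C c * X ^ m
  set w := ee p z - 1
  have hz : X ^ (2 * m) ∣ z ^ 2 := by
    rw [mul_comm, pow_mul]
    exact pow_dvd_pow_of_dvd (dvd_mul_left _ _) 2
  have hwz : X ^ (2 * m) ∣ w - z := hz.trans (sq_dvd_ee_sub_one_sub_self p hp z)
  have hw : X ^ (2 * m) ∣ w ^ 2 := by
    have hXw : X ^ m ∣ w := by
      have hXz : X ^ m ∣ z := dvd_mul_left _ _
      simpa using ((pow_dvd_pow X (by omega)).trans hwz).add hXz
    rw [mul_comm, pow_mul]
    exact pow_dvd_pow_of_dvd hXw 2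
  simpa using (hw.trans (sq_dvd_tlog_sub_self p hp w)).add hwz

lemma ell_ee_C_mul_X_pow (hp : 2 ≤ p) (c : k) {m i : ℕ} (hm : 1 ≤ m) (hi : i < 2 * m) :
    ell p i (ee p (C c * X ^ m)) = if i = m then c else 0 := by
  have h1 : constantCoeff (ee p (C c * X ^ m)) = 1 :=
    constantCoeff_ee p hp (by simp [zero_pow (show m ≠ 0 by omega)])
  rw [ell, h1, inv_one, map_one, one_mul,
    ← sub_add_cancel (tlog p _) (C c * X ^ m), map_add,
    PowerSeries.X_pow_dvd_iff.1 (X_pow_dvd_tlog_ee_sub_one_sub p hp c m) i hi, zero_add,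
    coeff_C_mul_X_pow]

lemma ellp_eq_of_ell_eq_ite {a b : ℕ} (hab : a + b = p)
    (ha : 1 ≤ a) (hb : 1 ≤ b) {u v : PowerSeries k} {A : k}
    (hu : ∀ i ∈ Finset.Ico 1 p, ell p i u = if i = a then A else 0) :
    ellp p u v = 2⁻¹ * (((b : k) - a) * A * ell p b v) := by
  have hpa : p - a = b := by omega
  have hpb : p - b = a := by omega
  have hbmem : b ∈ Finset.Ico 1 p := Finset.mem_Ico.2 ⟨hb, by omega⟩
  have hamem : a ∈ Finset.Ico 1 p := Finset.mem_Ico.2 ⟨ha, by omega⟩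
  have hfirst : ∑ i ∈ Finset.Ico 1 p, (i : k) * (ell p (p - i) u * ell p i v) =
      b * (A * ell p b v) := by
    rw [Finset.sum_eq_single_of_mem b hbmem, hpb, hu a hamem, if_pos rfl]
    intro i hi hib
    have hi := Finset.mem_Ico.1 hi
    rw [hu (p - i) (Finset.mem_Ico.2 ⟨by omega, by omega⟩), if_neg (by omega)]
    simp
  have hsecond : ∑ i ∈ Finset.Ico 1 p, (i : k) * (ell p (p - i) v * ell p i u) =
      a * (ell p b v * A) := by
    rw [Finset.sum_eq_single_of_mem a hamem, hpa, hu a hamem, if_pos rfl]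
    intro i hi hia
    rw [hu i hi, if_neg hia]
    simp
  rw [ellp]
  simp_rw [mul_sub]
  rw [Finset.sum_sub_distrib, hfirst, hsecond]
  ring

lemma HahnSeries.coeff_ofPowerSeries_mul_single_neg_one (f : PowerSeries k) :
    (HahnSeries.ofPowerSeries ℤ k f * HahnSeries.single (-1 : ℤ) (1 : k)).coeff (-1) =
      constantCoeff f := by
  simpa using HahnSeries.coeff_mul_single_add (x := HahnSeries.ofPowerSeries ℤ k f)
    (r := (1 : k)) (a := 0) (b := -1) |>.trans
    (by simpa using HahnSeries.ofPowerSeries_apply_coeff f 0)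

theorem ellp_eq_residue_same_unif (hp5 : 5 ≤ p) [CharP k p]
    (a b : ℕ) (ha : 1 ≤ a) (hb : 1 ≤ b) (hab : a + b = p) (hba : b < a)
    (α β : PowerSeries k) :
    ellp p (ee p (PowerSeries.C (R := k) (PowerSeries.constantCoeff (R := k) α) * X ^ a))
        (ee p (PowerSeries.C (R := k) (PowerSeries.constantCoeff (R := k) β) * X ^ b)) =
      (b : k) * PowerSeries.constantCoeff (R := k) α * PowerSeries.constantCoeff (R := k) β ∧
    ((HahnSeries.ofPowerSeries ℤ k α) * (b : LaurentSeries k) *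
          (HahnSeries.ofPowerSeries ℤ k β) *
          HahnSeries.single (-1 : ℤ) (1 : k)).coeff (-1 : ℤ) =
      (b : k) * PowerSeries.constantCoeff (R := k) α * PowerSeries.constantCoeff (R := k) β := by
  have hp2 : 2 ≤ p := by omega
  refine ⟨?_, ?_⟩
  · have hell (i : ℕ) (hi : i ∈ Finset.Ico 1 p) :=
      ell_ee_C_mul_X_pow p hp2 (constantCoeff α) ha (i := i)
        (by rw [Finset.mem_Ico] at hi; omega)
    rw [ellp_eq_of_ell_eq_ite p hab ha hb hell,
      ell_ee_C_mul_X_pow p hp2 _ hb (by omega), if_pos rfl]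
    have hneg : (a : k) = -b := by
      rw [eq_neg_iff_add_eq_zero, ← Nat.cast_add, hab, CharP.cast_eq_zero]
    have htwo : (2 : k) ≠ 0 := Ring.two_ne_zero (by rw [ringChar.eq k p]; omega)
    rw [hneg]
    field_simp
    ring
  · rw [← map_natCast (HahnSeries.ofPowerSeries ℤ k) b, ← map_mul, ← map_mul,
      HahnSeries.coeff_ofPowerSeries_mul_single_neg_one]
    simp [mul_comm]
end

section
/- Functoriality of ℓ^(p) under units congruent to 1 mod t^p: Let k be a field of characteristic p ≥ 5 and u, v, u', v' ∈ k[[t]]^× with u ≡ u' and v ≡ v' modulo (t^p). Then ℓ^(p)(ū ∧ v̄) = ℓ^(p)(ū' ∧ v̄') where bars denote images in (k[t]/(t^p))^×. Moreover ℓ^(p) is bimultiplicative and antisymmetric: ℓ^(p)(u₁u₂ ∧ v) = ℓ^(p)(u₁∧v) + ℓ^(p)(u₂∧v) and ℓ^(p)(u∧v) = −ℓ^(p)(v∧u), and ℓ^(p)(c ∧ v) = 0 for constants c ∈ k^×. -/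
open Finset PowerSeries

variable (p : ℕ) {k : Type*} [Field k]

/-!
Everything rests on the maps `ℓ_i`, `0 < i < p`: each only sees `u` modulo `X^p`, kills
constants, and is a homomorphism on units; the properties of `ℓ^(p)` are then formal.
For the homomorphism property, differentiate the truncated logarithm: since `i⁻¹ · i = 1` in `k`
for `i < p`, `d(tlog z) = (1 - (-z)^(p-1)) · z' / (1 + z)`, and `(-z)^(p-1)` vanishes below
degree `p - 1`. Hence `i · ℓ_i(u)` is the `X^(i-1)`-coefficient of the logarithmic derivative
`u' / u`, which is additive.
-/

theorem natCast_ne_zero_of_pos_of_lt [CharP k p] {n : ℕ} (h0 : 0 < n) (hn : n < p) :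
    (n : k) ≠ 0 := by
  rw [Ne, CharP.cast_eq_zero_iff k p]
  exact fun hdvd => (Nat.le_of_dvd h0 hdvd).not_gt hn

theorem tlog_sub_tlog_dvd {z z' : k⟦X⟧} (h : X ^ p ∣ z - z') : X ^ p ∣ tlog p z - tlog p z' := by
  rw [tlog, tlog, ← sum_sub_distrib]
  refine dvd_sum fun n _ => ?_
  rw [← smul_sub, smul_eq_C_mul]
  exact (h.trans (sub_dvd_pow_sub_pow z z' n)).mul_left _

theorem derivative_tlog [CharP k p] (z : k⟦X⟧) :
    d⁄dX k (tlog p z) = (∑ m ∈ range (p - 1), (-z) ^ m) * d⁄dX k z := by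
  rw [tlog, map_sum, sum_mul, sum_Ico_eq_sum_range]
  refine sum_congr rfl fun m hm => ?_
  have hm1 : ((1 + m : ℕ) : k) ≠ 0 :=
    natCast_ne_zero_of_pos_of_lt p (by omega) (by simp at hm; omega)
  have hcoeff : (-1 : k) ^ (1 + m + 1) * ((1 + m : ℕ) : k)⁻¹ * ((1 + m : ℕ) : k) = (-1) ^ m := by
    rw [inv_mul_cancel_right₀ hm1, pow_succ, pow_add]
    ring
  rw [Derivation.map_smul, Derivation.leibniz_pow, Nat.add_sub_cancel_left,
    ← Nat.cast_smul_eq_nsmul k, smul_smul, hcoeff, smul_eq_mul, neg_pow z, smul_eq_C_mul, map_pow,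
    map_neg, map_one, mul_assoc]

theorem coeff_tlog_mul_natCast [CharP k p] {z : k⟦X⟧} (hz : constantCoeff z = 0) {i : ℕ}
    (h1 : 1 ≤ i) (hi : i < p) :
    coeff i (tlog p z) * i = coeff (i - 1) (d⁄dX k z * (1 + z)⁻¹) := by
  have hunit : constantCoeff (1 + z) ≠ 0 := by simp [hz]
  have hgeom : ∑ m ∈ range (p - 1), (-z) ^ m = (1 - (-z) ^ (p - 1)) * (1 + z)⁻¹ := by
    rw [← mul_neg_geom_sum, sub_neg_eq_add, mul_comm (1 + z), mul_assoc,
      PowerSeries.mul_inv_cancel _ hunit, mul_one]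
  have hsmall : coeff (i - 1) ((-z) ^ (p - 1) * (d⁄dX k z * (1 + z)⁻¹)) = 0 := by
    refine X_pow_dvd_iff.mp ((pow_dvd_pow_of_dvd ?_ _).mul_right _) _ (by omega)
    rwa [dvd_neg, X_dvd_iff]
  calc coeff i (tlog p z) * i = coeff (i - 1) (d⁄dX k (tlog p z)) := by
        rw [coeff_derivative, Nat.sub_add_cancel h1, Nat.cast_sub h1, Nat.cast_one, sub_add_cancel]
    _ = coeff (i - 1) (d⁄dX k z * (1 + z)⁻¹) := by
        rw [derivative_tlog, hgeom, ← sub_zero (coeff (i - 1) (d⁄dX k z * _)), ← hsmall, ← map_sub]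
        congr 1
        ring

theorem ell_congr {u u' : k⟦X⟧} (h : X ^ p ∣ u - u') {i : ℕ} (hi : i < p) :
    ell p i u = ell p i u' := by
  have hconst : constantCoeff u = constantCoeff u' := by
    simpa [sub_eq_zero] using X_pow_dvd_iff.mp h 0 (by omega)
  have hz : X ^ p ∣ (C (constantCoeff u')⁻¹ * u - 1) - (C (constantCoeff u')⁻¹ * u' - 1) := by
    rw [sub_sub_sub_cancel_right, ← mul_sub]
    exact h.mul_left _
  rw [ell, ell, hconst, ← sub_eq_zero, ← map_sub]
  exact X_pow_dvd_iff.mp (tlog_sub_tlog_dvd p hz) i hi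

theorem ell_mul_natCast [CharP k p] {u : k⟦X⟧} (hu : constantCoeff u ≠ 0) {i : ℕ}
    (h1 : 1 ≤ i) (hi : i < p) :
    ell p i u * i = coeff (i - 1) (d⁄dX k u * u⁻¹) := by
  set c := constantCoeff u
  have hCc : C c⁻¹ * C c = 1 := by rw [← map_mul, inv_mul_cancel₀ hu, map_one]
  have hz : constantCoeff (C c⁻¹ * u - 1) = 0 := by simp [c, hu]
  have hlogDeriv : d⁄dX k (C c⁻¹ * u - 1) * (1 + (C c⁻¹ * u - 1))⁻¹ = d⁄dX k u * u⁻¹ := by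
    rw [add_sub_cancel, PowerSeries.mul_inv_rev, C_inv, inv_inv, Derivation.map_sub,
      Derivation.map_one_eq_zero, sub_zero, Derivation.leibniz, derivative_C, smul_zero, add_zero,
      smul_eq_mul]
    linear_combination (d⁄dX k u * u⁻¹) * hCc
  rw [ell, coeff_tlog_mul_natCast p hz h1 hi, hlogDeriv]

theorem derivative_mul_inv_mul {u v : k⟦X⟧} (hu : constantCoeff u ≠ 0)
    (hv : constantCoeff v ≠ 0) :
    d⁄dX k (u * v) * (u * v)⁻¹ = d⁄dX k u * u⁻¹ + d⁄dX k v * v⁻¹ := by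
  rw [Derivation.leibniz, PowerSeries.mul_inv_rev, smul_eq_mul, smul_eq_mul]
  linear_combination (d⁄dX k v * v⁻¹) * PowerSeries.mul_inv_cancel u hu +
    (d⁄dX k u * u⁻¹) * PowerSeries.mul_inv_cancel v hv

theorem ell_mul [CharP k p] {u v : k⟦X⟧} (hu : constantCoeff u ≠ 0) (hv : constantCoeff v ≠ 0)
    {i : ℕ} (h1 : 1 ≤ i) (hi : i < p) :
    ell p i (u * v) = ell p i u + ell p i v := by
  have huv : constantCoeff (u * v) ≠ 0 := by
    rw [map_mul]
    exact mul_ne_zero hu hv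
  refine mul_right_cancel₀ (natCast_ne_zero_of_pos_of_lt (k := k) p h1 hi) ?_
  rw [add_mul, ell_mul_natCast p huv h1 hi,
    ell_mul_natCast p hu h1 hi, ell_mul_natCast p hv h1 hi, derivative_mul_inv_mul hu hv, map_add]

theorem ell_C {i : ℕ} (hi : i ≠ 0) (c : k) : ell p i (C c) = 0 := by
  rw [ell, constantCoeff_C, ← map_mul, ← map_one C, ← map_sub, tlog, map_sum]
  refine sum_eq_zero fun n _ => ?_
  rw [← map_pow, map_smul, coeff_C, if_neg hi, smul_zero]

theorem ellp_congr {u u' v v' : k⟦X⟧} (hu : X ^ p ∣ u - u') (hv : X ^ p ∣ v - v') :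
    ellp p u v = ellp p u' v' := by
  unfold ellp
  congr 1
  refine sum_congr rfl fun i hi => ?_
  obtain ⟨h1, hi⟩ := mem_Ico.mp hi
  have hpi : p - i < p := by omega
  rw [ell_congr p hu hi, ell_congr p hv hi, ell_congr p hu hpi, ell_congr p hv hpi]

theorem ellp_mul_left [CharP k p] {u₁ u₂ : k⟦X⟧} (hu₁ : constantCoeff u₁ ≠ 0)
    (hu₂ : constantCoeff u₂ ≠ 0) (w : k⟦X⟧) :
    ellp p (u₁ * u₂) w = ellp p u₁ w + ellp p u₂ w := by
  unfold ellp
  rw [← mul_add, ← sum_add_distrib]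
  congr 1
  refine sum_congr rfl fun i hi => ?_
  obtain ⟨h1, hi⟩ := mem_Ico.mp hi
  rw [ell_mul p hu₁ hu₂ h1 hi, ell_mul p hu₁ hu₂ (by omega) (by omega)]
  ring

theorem ellp_skew (u v : k⟦X⟧) : ellp p u v = -ellp p v u := by
  unfold ellp
  rw [← mul_neg, ← sum_neg_distrib]
  congr 1
  refine sum_congr rfl fun i _ => ?_
  ring

theorem ellp_C_left (c : k) (w : k⟦X⟧) : ellp p (C c) w = 0 := by
  unfold ellp
  rw [sum_eq_zero, mul_zero]
  intro i hi
  obtain ⟨h1, hi⟩ := mem_Ico.mp hi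
  rw [ell_C p (by omega), ell_C p (by omega)]
  ring

theorem ellp_properties [CharP k p]
    (u v u' v' : PowerSeries k)
    (huu' : u - u' ∈ Ideal.span {(X : PowerSeries k) ^ p})
    (hvv' : v - v' ∈ Ideal.span {(X : PowerSeries k) ^ p}) :
    ellp p u v = ellp p u' v' ∧
    (∀ u₁ u₂ w : PowerSeries k, IsUnit u₁ → IsUnit u₂ → IsUnit w →
      ellp p (u₁ * u₂) w = ellp p u₁ w + ellp p u₂ w) ∧
    (∀ a b : PowerSeries k, ellp p a b = -ellp p b a) ∧
    (∀ c : k, c ≠ 0 → ∀ w : PowerSeries k, IsUnit w →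
      ellp p (PowerSeries.C (R := k) c) w = 0) := by
  have constantCoeff_ne_zero {u : k⟦X⟧} (hu : IsUnit u) : constantCoeff u ≠ 0 :=
    (isUnit_iff_constantCoeff.mp hu).ne_zero
  refine ⟨ellp_congr p (Ideal.mem_span_singleton.mp huu') (Ideal.mem_span_singleton.mp hvv'),
    fun u₁ u₂ w hu₁ hu₂ _ => ?_, ellp_skew p, fun c _ w _ => ellp_C_left p c w⟩
  exact ellp_mul_left p (constantCoeff_ne_zero hu₁) (constantCoeff_ne_zero hu₂) w
end
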